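/- arXiv:2506.14533 — 7 statements merged into one kernel-verified Lean document; each statement's English description precedes it below -/
import Mathlib

section
/- Let f: ℝ³ → [0,∞] be a nonnegative measurable function, let R > 0 and l > R. Then ((√3 − 1)/2) · R · ∫_{𝒞_{R/2, l+R/2, e₁}(0)} f(x) dx ≤ ∫_{−l}^{l} ∫_{B_R(0)} f(x + t e₁) dx dt ≤ 2R · ∫_{𝒞_{R, l+R, e₁}(0)} f(x) dx. -/
open MeasureTheory Metric Filter Real
open scoped ENNReal Topology

noncomputable section

/-- `ℝ³` as a Euclidean space. -/
abbrev E3 : Type := EuclideanSpace ℝ (Fin 3)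

/-- The first standard basis vector of `ℝ³`. -/
def e1 : E3 := EuclideanSpace.single 0 1

/-- The capsule of radius `R`, half-length `L`, direction `e`, centered at `x`:
`𝒞_{R,L,e}(x) = ⋃_{t ∈ [−L+R, L−R]} (t e + B_R(x))`. -/
def capsule (R L : ℝ) (e : E3) (x : E3) : Set E3 :=
  ⋃ t ∈ Set.Icc (-(L - R)) (L - R), ball (x + t • e) R

/-- Componentwise (vector) Laplacian. -/
def vlap (u : E3 → E3) (x : E3) : E3 :=
  ∑ i : Fin 3, fderiv ℝ (fun y => fderiv ℝ u y (EuclideanSpace.single i 1)) x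
    (EuclideanSpace.single i 1)

/-- Scalar Laplacian. -/
def lapS (f : E3 → ℝ) (x : E3) : ℝ :=
  ∑ i : Fin 3, fderiv ℝ (fun y => fderiv ℝ f y (EuclideanSpace.single i 1)) x
    (EuclideanSpace.single i 1)

/-- Divergence of a vector field on `ℝ³`. -/
def div3 (u : E3 → E3) (x : E3) : ℝ :=
  ∑ i : Fin 3, fderiv ℝ u x (EuclideanSpace.single i 1) i

/-- `|∇u|²`, the sum of squares of all partial derivatives. -/
def gradNormSq (u : E3 → E3) (x : E3) : ℝ :=
  ∑ i : Fin 3, ∑ j : Fin 3, (fderiv ℝ u x (EuclideanSpace.single i 1) j) ^ 2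

/-- The curl of a vector field on `ℝ³`. -/
def curl3 (ψ : E3 → E3) (x : E3) : E3 :=
  (EuclideanSpace.equiv (Fin 3) ℝ).symm
    ![fderiv ℝ ψ x (EuclideanSpace.single 1 1) 2 - fderiv ℝ ψ x (EuclideanSpace.single 2 1) 1,
      fderiv ℝ ψ x (EuclideanSpace.single 2 1) 0 - fderiv ℝ ψ x (EuclideanSpace.single 0 1) 2,
      fderiv ℝ ψ x (EuclideanSpace.single 0 1) 1 - fderiv ℝ ψ x (EuclideanSpace.single 1 1) 0]

/-- Cross product on `ℝ³`. -/
def cross3 (a b : E3) : E3 :=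
  (EuclideanSpace.equiv (Fin 3) ℝ).symm
    ![a 1 * b 2 - a 2 * b 1, a 2 * b 0 - a 0 * b 2, a 0 * b 1 - a 1 * b 0]

/-- A D-solution of the stationary Navier--Stokes equations on `ℝ³`:
`u, p` smooth, `−Δu + (u·∇)u + ∇p = 0`, `div u = 0`, `u → 0` at infinity,
and finite Dirichlet energy. -/
structure IsDSolution (u : E3 → E3) (p : E3 → ℝ) : Prop where
  smooth_u : ContDiff ℝ (⊤ : ℕ∞) u
  smooth_p : ContDiff ℝ (⊤ : ℕ∞) p
  nse : ∀ x, -vlap u x + fderiv ℝ u x (u x) + gradient p x = 0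
  div_free : ∀ x, div3 u x = 0
  vanish : Tendsto u (cocompact E3) (𝓝 0)
  dirichlet : ∫⁻ x, ENNReal.ofReal (gradNormSq u x) < ⊤

/-- Membership in the weak Lebesgue space `L^{p,∞}(ℝ³)`:
the weak norm `sup_{α>0} α · |{|u|>α}|^{1/p}` is finite. -/
def MemWeakLp (u : E3 → E3) (p : ℝ) : Prop :=
  ∃ C : ℝ≥0∞, C ≠ ⊤ ∧ ∀ α : ℝ, 0 < α →
    ENNReal.ofReal α * (volume {x : E3 | α < ‖u x‖}) ^ (1 / p) ≤ C

/-- The streamwise maximal function of a real-valued function along the flow `Φ`. -/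
def MPhiR (Φ : ℝ → E3 → E3) (f : E3 → ℝ) (x : E3) : ℝ≥0∞ :=
  ⨆ s : {s : ℝ // 0 < s}, ENNReal.ofReal ((2 * s.1)⁻¹ * ∫ τ in (-s.1)..s.1, |f (Φ τ x)|)

/-- The centered Hardy--Littlewood maximal function (`ℝ≥0∞`-valued). -/
def Mcen (g : E3 → ℝ≥0∞) (x : E3) : ℝ≥0∞ :=
  ⨆ r : {r : ℝ // 0 < r}, (volume (ball x r.1))⁻¹ * ∫⁻ y in ball x r.1, g y

/-- The streamwise maximal function of an `ℝ≥0∞`-valued function along the flow `Φ`. -/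
def MPhiE (Φ : ℝ → E3 → E3) (g : E3 → ℝ≥0∞) (x : E3) : ℝ≥0∞ :=
  ⨆ s : {s : ℝ // 0 < s}, (ENNReal.ofReal (2 * s.1))⁻¹ * ∫⁻ τ in Set.Ioc (-s.1) s.1, g (Φ τ x)

/-- `Φ : ℝ × ℝ³ → ℝ³` is the (measure-preserving) flow map of the vector field `u`. -/
def IsFlowMap (Φ : ℝ → E3 → E3) (u : E3 → E3) : Prop :=
  (∀ x, Φ 0 x = x) ∧ (∀ s x, HasDerivAt (fun τ => Φ τ x) (u (Φ s x)) s) ∧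
    (∀ s, MeasurePreserving (Φ s) volume volume)

/-- The fundamental solution `Γ(x) = (1/(4πν|x|)) e^{−λ(|x|−x₁)}`, `λ = U/(2ν)`,
of the drift–Laplace operator `U ∂₁ − ν Δ` on `ℝ³`. -/
def Gamma (ν U : ℝ) (x : E3) : ℝ :=
  (4 * π * ν * ‖x‖)⁻¹ * Real.exp (-(U / (2 * ν)) * (‖x‖ - x 0))

lemma mem_ball_e1 {r : ℝ} (hr : 0 < r) (t : ℝ) (y : E3) :
    y ∈ ball (t • e1) r ↔ (y 0 - t)^2 + ((y 1)^2 + (y 2)^2) < r^2 := by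
  rw [mem_ball, EuclideanSpace.dist_eq, Real.sqrt_lt' hr, Fin.sum_univ_three]
  simp [e1, EuclideanSpace.single_apply, Real.dist_eq, sq_abs]
  ring_nf

lemma shift (c : E3) (g : E3 → ℝ≥0∞) (r : ℝ) :
    ∫⁻ x in ball (0:E3) r, g (x + c) = ∫⁻ y in ball c r, g y := by
  rw [← lintegral_indicator measurableSet_ball _, ← lintegral_indicator measurableSet_ball _,
    ← lintegral_add_right_eq_self (fun y => (ball c r).indicator g y) c]
  congr 1; ext x
  by_cases h : x ∈ ball (0:E3) r
  · rw [Set.indicator_of_mem h, Set.indicator_of_mem (by simpa using h)]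
  · rw [Set.indicator_of_notMem h, Set.indicator_of_notMem (by simpa using h)]

lemma mem_capsule {R' L : ℝ} {y : E3} :
    y ∈ capsule R' L e1 0 ↔ ∃ t, -(L - R') ≤ t ∧ t ≤ L - R' ∧ dist y (t • e1) < R' := by
  simp [capsule, Set.mem_iUnion, mem_ball, Set.mem_Icc, and_assoc]


set_option maxHeartbeats 2000000 in
/-- Lemma 2.3. For a nonnegative measurable `f`, `R > 0` and `l > R`,
`((√3 − 1)/2) R ∫_{𝒞_{R/2, l+R/2, e₁}} f ≤ ∫_{−l}^{l} ∫_{B_R} f(x + t e₁) dx dt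
  ≤ 2R ∫_{𝒞_{R, l+R, e₁}} f`. -/
theorem statement4 (f : E3 → ℝ≥0∞) (hf : Measurable f) (R l : ℝ) (hR : 0 < R) (hl : R < l) :
    ENNReal.ofReal ((Real.sqrt 3 - 1) / 2 * R) * (∫⁻ x in capsule (R / 2) (l + R / 2) e1 0, f x) ≤
      (∫⁻ t in Set.Ioc (-l) l, ∫⁻ x in ball (0 : E3) R, f (x + t • e1)) ∧
    (∫⁻ t in Set.Ioc (-l) l, ∫⁻ x in ball (0 : E3) R, f (x + t • e1)) ≤
      ENNReal.ofReal (2 * R) * ∫⁻ x in capsule R (l + R) e1 0, f x := by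
  have hs3a : 1 < Real.sqrt 3 := by
    nlinarith [Real.sq_sqrt (by norm_num : (3:ℝ) ≥ 0), Real.sqrt_nonneg 3]
  have hs3b : Real.sqrt 3 < 2 := by
    nlinarith [Real.sq_sqrt (by norm_num : (3:ℝ) ≥ 0), Real.sqrt_nonneg 3]
  set c : ℝ := (Real.sqrt 3 - 1) / 2 * R with hcdef
  set T : E3 → Set ℝ := fun y => {t : ℝ | dist y (t • e1) < R} with hTdef
  have hTmeas : ∀ y, MeasurableSet (T y) := fun y =>
    (isOpen_lt (Continuous.dist continuous_const
      ((continuous_id.smul continuous_const))) continuous_const).measurableSet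
  set g : E3 → ℝ≥0∞ := fun y => volume (T y ∩ Set.Ioc (-l) l) with hgdef
  have hcapm : ∀ R' L : ℝ, MeasurableSet (capsule R' L e1 0) := fun R' L =>
    (isOpen_biUnion fun t _ => isOpen_ball).measurableSet
  -- Step 1
  have step1 : (∫⁻ t in Set.Ioc (-l) l, ∫⁻ x in ball (0 : E3) R, f (x + t • e1))
      = ∫⁻ y, f y * g y := by
    have h1 : ∀ t : ℝ, ∫⁻ x in ball (0:E3) R, f (x + t • e1)
        = ∫⁻ y, (ball (t • e1) R).indicator f y := fun t => by
      rw [shift (t • e1) f R, lintegral_indicator measurableSet_ball]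
    calc (∫⁻ t in Set.Ioc (-l) l, ∫⁻ x in ball (0 : E3) R, f (x + t • e1))
        = ∫⁻ t in Set.Ioc (-l) l, ∫⁻ y, (ball (t • e1) R).indicator f y :=
          lintegral_congr fun t => h1 t
      _ = ∫⁻ y, ∫⁻ t in Set.Ioc (-l) l, (ball (t • e1) R).indicator f y := by
          apply lintegral_lintegral_swap
          have hS : MeasurableSet {p : ℝ × E3 | dist p.2 (p.1 • e1) < R} :=
            (isOpen_lt (Continuous.dist continuous_snd
              (continuous_fst.smul continuous_const)) continuous_const).measurableSet
          have : Function.uncurry (fun t (y : E3) => (ball (t • e1) R).indicator f y)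
              = Set.indicator {p : ℝ × E3 | dist p.2 (p.1 • e1) < R} (fun p => f p.2) := by
            ext ⟨t0, y0⟩
            rw [Function.uncurry_apply_pair]
            show _ = Set.indicator {p : ℝ × E3 | dist p.2 (p.1 • e1) < R} (fun p => f p.2) (t0, y0)
            by_cases h : dist y0 (t0 • e1) < R
            · rw [Set.indicator_of_mem (mem_ball.mpr h),
                Set.indicator_of_mem (by exact h)]
            · rw [Set.indicator_of_notMem (fun hh => h (mem_ball.mp hh)),
                Set.indicator_of_notMem (by exact h)]
          rw [this]
          exact ((hf.comp measurable_snd).indicator hS).aemeasurable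
      _ = ∫⁻ y, f y * g y := by
          refine lintegral_congr fun y => ?_
          have heq : (fun t => (ball (t • e1) R).indicator f y)
              = fun t => (T y).indicator (fun _ => f y) t := by
            ext t
            by_cases h : dist y (t • e1) < R
            · rw [Set.indicator_of_mem (mem_ball.mpr h),
                Set.indicator_of_mem (by exact h)]
            · rw [Set.indicator_of_notMem (fun hh => h (mem_ball.mp hh)),
                Set.indicator_of_notMem (by exact h)]
          rw [heq, lintegral_indicator_const (hTmeas y),
            Measure.restrict_apply (hTmeas y)]
  rw [step1]
  constructor
  · -- lower bound
    have lower_pt : ∀ y, (capsule (R/2) (l+R/2) e1 0).indicator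
        (fun y => ENNReal.ofReal c * f y) y ≤ f y * g y := by
      intro y
      by_cases hy : y ∈ capsule (R/2) (l+R/2) e1 0
      · rw [Set.indicator_of_mem hy]
        obtain ⟨s, hs1, hs2, hs3⟩ := mem_capsule.mp hy
        set a := y 0 with ha
        set b := (y 1)^2 + (y 2)^2 with hb
        have hb0 : 0 ≤ b := by positivity
        have hmem : (a - s)^2 + b < (R/2)^2 :=
          (mem_ball_e1 (by linarith) s y).mp (mem_ball.mpr hs3)
        have haslt : a - s < R/2 := by nlinarith [sq_nonneg (a - s - R/2)]
        have haslt' : -(R/2) < a - s := by nlinarith [sq_nonneg (a - s + R/2)]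
        have hal : a < l + R/2 := by linarith
        have hal' : -(l + R/2) < a := by linarith
        set w := Real.sqrt (R^2 - b) with hwdef
        have hw2 : w^2 = R^2 - b := Real.sq_sqrt (by nlinarith)
        have hw : Real.sqrt 3 / 2 * R < w := by
          rw [hwdef]
          rw [show Real.sqrt 3 / 2 * R = Real.sqrt 3 * (R/2) by ring]
          apply (Real.lt_sqrt (by positivity)).mpr
          nlinarith [Real.sq_sqrt (by norm_num : (3:ℝ) ≥ 0)]
        have hmA : R < Real.sqrt 3 * R := by nlinarith
        have hmB : Real.sqrt 3 * R < 2 * R := by nlinarith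
        set L0 := max (-l) (a - w) with hL0
        set U0 := min l (a + w) with hU0
        have hsub : Set.Ioo L0 U0 ⊆ T y ∩ Set.Ioc (-l) l := by
          intro t ht
          obtain ⟨ht1, ht2⟩ := ht
          have h1 : a - w < t := lt_of_le_of_lt (le_max_right _ _) ht1
          have h2 : t < a + w := lt_of_lt_of_le ht2 (min_le_right _ _)
          have h3 : -l < t := lt_of_le_of_lt (le_max_left _ _) ht1
          have h4 : t ≤ l := le_of_lt (lt_of_lt_of_le ht2 (min_le_left _ _))
          refine ⟨?_, h3, h4⟩
          show dist y (t • e1) < R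
          rw [← mem_ball, mem_ball_e1 hR]
          have : (a - t)^2 < w^2 := by nlinarith
          show (y 0 - t)^2 + ((y 1)^2 + (y 2)^2) < R^2
          rw [← ha, ← hb]
          nlinarith
        have hlen : c ≤ U0 - L0 := by
          rw [hcdef]
          rcases max_cases (-l) (a - w) with ⟨e1', e2'⟩ | ⟨e1', e2'⟩ <;>
            rcases min_cases l (a + w) with ⟨e3', e4'⟩ | ⟨e3', e4'⟩ <;>
            rw [hL0, hU0, e1', e3'] <;> linarith
        have hgc : ENNReal.ofReal c ≤ g y :=
          calc ENNReal.ofReal c ≤ ENNReal.ofReal (U0 - L0) := ENNReal.ofReal_le_ofReal hlen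
            _ = volume (Set.Ioo L0 U0) := (Real.volume_Ioo).symm
            _ ≤ g y := measure_mono hsub
        calc ENNReal.ofReal c * f y ≤ g y * f y := mul_le_mul_left hgc _
          _ = f y * g y := mul_comm _ _
      · rw [Set.indicator_of_notMem hy]; exact zero_le
    calc ENNReal.ofReal c * ∫⁻ x in capsule (R / 2) (l + R / 2) e1 0, f x
        = ∫⁻ y, (capsule (R/2) (l+R/2) e1 0).indicator (fun y => ENNReal.ofReal c * f y) y := by
          rw [lintegral_indicator (hcapm _ _),
            lintegral_const_mul' _ _ ENNReal.ofReal_ne_top]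
      _ ≤ ∫⁻ y, f y * g y := lintegral_mono lower_pt
  · -- upper bound
    have upper_pt : ∀ y, f y * g y ≤ (capsule R (l+R) e1 0).indicator
        (fun y => ENNReal.ofReal (2*R) * f y) y := by
      intro y
      by_cases hy : y ∈ capsule R (l+R) e1 0
      · rw [Set.indicator_of_mem hy]
        have hsub : T y ∩ Set.Ioc (-l) l ⊆ Set.Ioo (y 0 - R) (y 0 + R) := by
          intro t ht
          have h1 : (y 0 - t)^2 + ((y 1)^2 + (y 2)^2) < R^2 :=
            (mem_ball_e1 hR t y).mp (mem_ball.mpr ht.1)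
          have hb0 : 0 ≤ (y 1)^2 + (y 2)^2 := by positivity
          constructor
          · nlinarith [sq_nonneg (y 0 - t + R)]
          · nlinarith [sq_nonneg (y 0 - t - R)]
        have hgy : g y ≤ ENNReal.ofReal (2*R) :=
          calc g y ≤ volume (Set.Ioo (y 0 - R) (y 0 + R)) := measure_mono hsub
            _ = ENNReal.ofReal (2*R) := by rw [Real.volume_Ioo]; ring_nf
        calc f y * g y ≤ f y * ENNReal.ofReal (2*R) := mul_le_mul_right hgy _
          _ = ENNReal.ofReal (2*R) * f y := mul_comm _ _
      · rw [Set.indicator_of_notMem hy]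
        have : T y ∩ Set.Ioc (-l) l = ∅ := by
          rw [Set.eq_empty_iff_forall_notMem]
          rintro t ⟨h1, h2, h3⟩
          exact hy (mem_capsule.mpr ⟨t, by linarith, by linarith, h1⟩)
        rw [hgdef]; simp only [this, measure_empty, mul_zero]; exact le_refl _
    calc (∫⁻ y, f y * g y)
        ≤ ∫⁻ y, (capsule R (l+R) e1 0).indicator (fun y => ENNReal.ofReal (2*R) * f y) y :=
          lintegral_mono upper_pt
      _ = ENNReal.ofReal (2*R) * ∫⁻ x in capsule R (l + R) e1 0, f x := by
          rw [lintegral_indicator (hcapm _ _),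
            lintegral_const_mul' _ _ ENNReal.ofReal_ne_top]
end
end

section
/- Let σ ≥ 0. There exist constants ε₀ > 0 and K > 0 (with K absolute) with the following property. Let u: ℝ³ → ℝ³ be a continuous vector field, and suppose for each w ∈ {x, z} ⊂ ℝ³ we are given R_w > 0, L_w > R_w, e_w ∈ S² such that the capsule 𝒞_w = 𝒞_{R_w,L_w,e_w}(w) satisfies: ⨍_{B_{R_w}(w)} u dy = U_w e_w with U_w = L_w^{1+σ}/R_w^{2+σ}, and sup_{𝒞_w} |u − U_w e_w| ≤ ε₀ (R_w/L_w) U_w. If 𝒞_x ∩ 𝒞_z ≠ ∅ and R_z ≤ 2 R_x, then 𝒞_z ⊂ K 𝒞_x. -/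
open MeasureTheory Metric Filter Real
open scoped ENNReal Topology

noncomputable section

set_option maxHeartbeats 2000000

/-- Lemma 3.6, engulfing property of capsules. There is an absolute
constant `K > 0` such that for every `σ ≥ 0` there is `ε₀ > 0` with the following property:
if the capsules `𝒞_x, 𝒞_z` of two long points `x, z` (with the stated average and oscillation
properties) intersect and `R_z ≤ 2R_x`, then `𝒞_z ⊂ K𝒞_x`. -/
theorem statement10 : ∃ K : ℝ, 0 < K ∧ ∀ σ : ℝ, 0 ≤ σ → ∃ ε₀ : ℝ, 0 < ε₀ ∧
    ∀ u : E3 → E3, Continuous u →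
    ∀ (x z : E3) (Rx Lx Rz Lz Ux Uz : ℝ) (ex ez : E3),
    0 < Rx → Rx < Lx → 0 < Rz → Rz < Lz → ‖ex‖ = 1 → ‖ez‖ = 1 →
    Ux = Lx ^ (1 + σ) / Rx ^ (2 + σ) → Uz = Lz ^ (1 + σ) / Rz ^ (2 + σ) →
    (⨍ y in ball x Rx, u y) = Ux • ex →
    (⨍ y in ball z Rz, u y) = Uz • ez →
    (∀ y ∈ capsule Rx Lx ex x, ‖u y - Ux • ex‖ ≤ ε₀ * (Rx / Lx) * Ux) →
    (∀ y ∈ capsule Rz Lz ez z, ‖u y - Uz • ez‖ ≤ ε₀ * (Rz / Lz) * Uz) →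
    (capsule Rx Lx ex x ∩ capsule Rz Lz ez z).Nonempty →
    Rz ≤ 2 * Rx →
    capsule Rz Lz ez z ⊆ capsule (K * Rx) (K * Lx) ex x := by
  refine ⟨100, by norm_num, fun σ hσ => ⟨1/6, by norm_num, ?_⟩⟩
  intro u _ x z Rx Lx Rz Lz Ux Uz ex ez hRx hRLx hRz hRLz hex hez hUx hUz _ _ hoscx hoscz hint hRzx
  obtain ⟨y₀, hy₀x, hy₀z⟩ := hint
  have hLx0 : 0 < Lx := hRx.trans hRLx
  have hLz0 : 0 < Lz := hRz.trans hRLz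
  have hUx0 : 0 < Ux := by
    rw [hUx]; exact div_pos (Real.rpow_pos_of_pos hLx0 _) (Real.rpow_pos_of_pos hRx _)
  have hUz0 : 0 < Uz := by
    rw [hUz]; exact div_pos (Real.rpow_pos_of_pos hLz0 _) (Real.rpow_pos_of_pos hRz _)
  have h1 := hoscx y₀ hy₀x
  have h2 := hoscz y₀ hy₀z
  have hD : ‖Ux • ex - Uz • ez‖ ≤ 1/6 * (Rx/Lx) * Ux + 1/6 * (Rz/Lz) * Uz := by
    have hid : Ux • ex - Uz • ez = -(u y₀ - Ux • ex) + (u y₀ - Uz • ez) := by abel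
    rw [hid]
    refine (norm_add_le _ _).trans ?_
    rw [norm_neg]; exact add_le_add h1 h2

  have hRLx1 : Rx/Lx ≤ 1 := by
    rw [div_le_one hLx0]; linarith
  have hRLz1 : Rz/Lz ≤ 1 := by
    rw [div_le_one hLz0]; linarith
  have hRLx0 : 0 ≤ Rx/Lx := by positivity
  have hRLz0 : 0 ≤ Rz/Lz := by positivity
  -- |Ux - Uz| ≤ D ≤ (1/6)(Ux+Uz) hence comparability
  have hUdiff : |Ux - Uz| ≤ 1/6 * (Ux + Uz) := by
    have h3 : |Ux - Uz| ≤ ‖Ux • ex - Uz • ez‖ := by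
      have e1 : ‖Ux • ex‖ = Ux := by
        rw [norm_smul, hex, mul_one, Real.norm_eq_abs, abs_of_pos hUx0]
      have e2 : ‖Uz • ez‖ = Uz := by
        rw [norm_smul, hez, mul_one, Real.norm_eq_abs, abs_of_pos hUz0]
      calc |Ux - Uz| = |‖Ux • ex‖ - ‖Uz • ez‖| := by rw [e1, e2]
        _ ≤ ‖Ux • ex - Uz • ez‖ := abs_norm_sub_norm_le _ _
    refine h3.trans (hD.trans ?_)
    have b1 : (Rx/Lx) * Ux ≤ 1 * Ux := by
      exact mul_le_mul_of_nonneg_right hRLx1 hUx0.le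
    have b2 : (Rz/Lz) * Uz ≤ 1 * Uz := by
      exact mul_le_mul_of_nonneg_right hRLz1 hUz0.le
    nlinarith
  have habs := abs_le.mp hUdiff
  have hUzx : Uz ≤ 2 * Ux := by linarith
  have hUxz : Ux ≤ 2 * Uz := by linarith
  -- Lz ≤ 8 Lx
  have h1σ : (0:ℝ) < 1 + σ := by linarith
  have h2σ : (0:ℝ) ≤ 2 + σ := by linarith
  have hLz8 : Lz ≤ 8 * Lx := by
    by_contra hcon
    push_neg at hcon
    have hlt : (8*Lx) ^ (1+σ) < Lz ^ (1+σ) :=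
      Real.rpow_lt_rpow (by positivity) hcon h1σ
    have key : Lz ^ (1+σ) ≤ (8*Lx) ^ (1+σ) := by
      have e1 : Lz ^ (1+σ) = Uz * Rz ^ (2+σ) := by
        rw [hUz, div_mul_cancel₀]
        exact ne_of_gt (Real.rpow_pos_of_pos hRz _)
      have e2 : Rz ^ (2+σ) ≤ (2*Rx) ^ (2+σ) :=
        Real.rpow_le_rpow hRz.le hRzx h2σ
      have e3 : Uz * Rz ^ (2+σ) ≤ 2 * Ux * (2*Rx) ^ (2+σ) := by
        have := Real.rpow_pos_of_pos hRz (2+σ)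
        have h2Rx : (0:ℝ) < (2*Rx) ^ (2+σ) := Real.rpow_pos_of_pos (by linarith) _
        nlinarith
      have e4 : 2 * Ux * (2*Rx) ^ (2+σ) = 2 ^ (3+σ) * Lx ^ (1+σ) := by
        rw [hUx, Real.mul_rpow (by norm_num) hRx.le]
        have hRxne : Rx ^ (2+σ) ≠ 0 := ne_of_gt (Real.rpow_pos_of_pos hRx _)
        have e5 : (2:ℝ) ^ (3+σ) = 2 * 2 ^ (2+σ) := by
          rw [show (3:ℝ)+σ = 1 + (2+σ) by ring, Real.rpow_add (by norm_num), Real.rpow_one]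
        rw [e5]; field_simp
      have e6 : (2:ℝ) ^ (3+σ) ≤ 2 ^ (3+3*σ) :=
        Real.rpow_le_rpow_of_exponent_le (by norm_num) (by linarith)
      have h238 : (2:ℝ) ^ (3:ℝ) = 8 := by
        rw [show (3:ℝ) = ((3:ℕ):ℝ) by norm_num, Real.rpow_natCast]; norm_num
      have e7 : (2:ℝ) ^ (3+3*σ) = 8 ^ (1+σ) := by
        rw [show (3:ℝ)+3*σ = 3*(1+σ) by ring, Real.rpow_mul (by norm_num : (0:ℝ) ≤ 2), h238]
      have e8 : (8*Lx) ^ (1+σ) = 8 ^ (1+σ) * Lx ^ (1+σ) :=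
        Real.mul_rpow (by norm_num) hLx0.le
      have hLxp : (0:ℝ) < Lx ^ (1+σ) := Real.rpow_pos_of_pos hLx0 _
      calc Lz ^ (1+σ) = Uz * Rz ^ (2+σ) := e1
        _ ≤ 2 * Ux * (2*Rx) ^ (2+σ) := e3
        _ = 2 ^ (3+σ) * Lx ^ (1+σ) := e4
        _ ≤ 2 ^ (3+3*σ) * Lx ^ (1+σ) := mul_le_mul_of_nonneg_right e6 hLxp.le
        _ = (8*Lx) ^ (1+σ) := by rw [e7, e8]
    exact absurd key (not_le.mpr hlt)
  -- the near-parallel direction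
  set c : ℝ := Ux / Uz with hc
  have hc0 : 0 < c := div_pos hUx0 hUz0
  have hc2 : c ≤ 2 := by
    rw [hc, div_le_iff₀ hUz0]; linarith
  have hperp : ‖ez - c • ex‖ = ‖Ux • ex - Uz • ez‖ / Uz := by
    have hid : ez - c • ex = (-Uz⁻¹) • (Ux • ex - Uz • ez) := by
      have ha : (-Uz⁻¹ * Ux) = -c := by rw [hc]; field_simp
      have hb : (-Uz⁻¹ * Uz) = -1 := by field_simp
      rw [smul_sub, smul_smul, smul_smul, ha, hb]
      module
    rw [hid, norm_smul, Real.norm_eq_abs, abs_neg, abs_inv, abs_of_pos hUz0,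
      inv_mul_eq_div]
  have hLzperp : Lz * ‖ez - c • ex‖ ≤ 3 * Rx := by
    rw [hperp, ← mul_div_assoc, div_le_iff₀ hUz0]
    have hb : Lz * ‖Ux • ex - Uz • ez‖ ≤ Lz * (1/6 * (Rx/Lx) * Ux + 1/6 * (Rz/Lz) * Uz) :=
      mul_le_mul_of_nonneg_left hD hLz0.le
    have hb1 : Lz * (Rx/Lx) ≤ 8 * Rx := by
      have hm : Lz * (Rx/Lx) ≤ 8 * Lx * (Rx/Lx) := mul_le_mul_of_nonneg_right hLz8 hRLx0
      have heq : 8 * Lx * (Rx/Lx) = 8 * Rx := by field_simp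
      linarith
    have hb2 : Lz * (Rz/Lz) = Rz := by field_simp
    nlinarith [mul_le_mul hb1 hUxz (by positivity : (0:ℝ) ≤ Ux) (by linarith : (0:ℝ) ≤ 8*Rx)]
  -- unfold capsule memberships
  simp only [capsule, Set.mem_iUnion, exists_prop, Set.mem_Icc, mem_ball, dist_eq_norm] at hy₀x hy₀z ⊢
  obtain ⟨s₀, ⟨hs₀l, hs₀r⟩, hys₀⟩ := hy₀x
  obtain ⟨t₀, ⟨ht₀l, ht₀r⟩, hyt₀⟩ := hy₀z
  intro y hy
  simp only [capsule, Set.mem_iUnion, exists_prop, Set.mem_Icc, mem_ball, dist_eq_norm] at hy ⊢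
  obtain ⟨t, ⟨htl, htr⟩, hyt⟩ := hy
  set sr : ℝ := s₀ + c * (t - t₀) with hsr
  have htt0 : |t - t₀| ≤ 2 * Lz := by
    rw [abs_sub_le_iff]; constructor <;> linarith
  have hdev : ‖y - (x + sr • ex)‖ < 11 * Rx := by
    have hid : y - (x + sr • ex) =
        (y - (z + t • ez)) - (y₀ - (z + t₀ • ez)) + (y₀ - (x + s₀ • ex))
          + (t - t₀) • (ez - c • ex) := by
      rw [hsr]; module
    rw [hid]
    have hA : ‖y - (z + t • ez)‖ < Rz := hyt
    have hB : ‖y₀ - (z + t₀ • ez)‖ < Rz := hyt₀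
    have hC : ‖y₀ - (x + s₀ • ex)‖ < Rx := hys₀
    have hE : ‖(t - t₀) • (ez - c • ex)‖ ≤ 6 * Rx := by
      rw [norm_smul, Real.norm_eq_abs]
      calc |t - t₀| * ‖ez - c • ex‖ ≤ 2 * Lz * ‖ez - c • ex‖ :=
            mul_le_mul_of_nonneg_right htt0 (norm_nonneg _)
        _ = 2 * (Lz * ‖ez - c • ex‖) := by ring
        _ ≤ 2 * (3 * Rx) := by linarith
        _ = 6 * Rx := by ring
    calc ‖(y - (z + t • ez)) - (y₀ - (z + t₀ • ez)) + (y₀ - (x + s₀ • ex))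
          + (t - t₀) • (ez - c • ex)‖
        ≤ ‖(y - (z + t • ez)) - (y₀ - (z + t₀ • ez)) + (y₀ - (x + s₀ • ex))‖
          + ‖(t - t₀) • (ez - c • ex)‖ := norm_add_le _ _
      _ ≤ ‖(y - (z + t • ez)) - (y₀ - (z + t₀ • ez))‖ + ‖y₀ - (x + s₀ • ex)‖
          + ‖(t - t₀) • (ez - c • ex)‖ := by
            have := norm_add_le ((y - (z + t • ez)) - (y₀ - (z + t₀ • ez))) (y₀ - (x + s₀ • ex))
            linarith
      _ ≤ ‖y - (z + t • ez)‖ + ‖y₀ - (z + t₀ • ez)‖ + ‖y₀ - (x + s₀ • ex)‖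
          + ‖(t - t₀) • (ez - c • ex)‖ := by
            have := norm_sub_le (y - (z + t • ez)) (y₀ - (z + t₀ • ez))
            linarith
      _ < Rz + Rz + Rx + 6 * Rx := by linarith
      _ ≤ 11 * Rx := by linarith
  have hsrb : |sr| ≤ 33 * Lx := by
    rw [hsr]
    calc |s₀ + c * (t - t₀)| ≤ |s₀| + |c * (t - t₀)| := abs_add_le _ _
      _ = |s₀| + c * |t - t₀| := by rw [abs_mul, abs_of_pos hc0]
      _ ≤ Lx + 2 * (2 * Lz) := by
          have h4 : |s₀| ≤ Lx := by rw [abs_le]; constructor <;> linarith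
          have h5 : c * |t - t₀| ≤ 2 * (2 * Lz) :=
            mul_le_mul hc2 htt0 (abs_nonneg _) (by norm_num)
          linarith
      _ ≤ Lx + 32 * Lx := by linarith
      _ = 33 * Lx := by ring
  by_cases hcase : |sr| ≤ 100 * Lx - 100 * Rx
  · refine ⟨sr, ⟨?_, ?_⟩, ?_⟩
    · have := abs_le.mp hcase; linarith [this.1]
    · exact (abs_le.mp hcase).2
    · linarith
  · push_neg at hcase
    refine ⟨0, ⟨by linarith, by linarith⟩, ?_⟩
    have hnear : ‖y - (x + (0:ℝ) • ex)‖ ≤ ‖y - (x + sr • ex)‖ + |sr| := by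
      have hid2 : y - (x + (0:ℝ) • ex) = (y - (x + sr • ex)) + sr • ex := by module
      rw [hid2]
      refine (norm_add_le _ _).trans ?_
      rw [norm_smul, Real.norm_eq_abs, hex, mul_one]
    have h67 : 67 * Lx < 100 * Rx := by linarith
    calc ‖y - (x + (0:ℝ) • ex)‖ ≤ ‖y - (x + sr • ex)‖ + |sr| := hnear
      _ < 11 * Rx + 33 * Lx := by linarith
      _ < 100 * Rx := by linarith
end
end

section
/- Let K ≥ 1 and let A ⊂ ℝ³ be a set such that to each x ∈ A is associated a capsule 𝒞_x = 𝒞_{R(x),L(x),e(x)}(x) with R(x) > 0, L(x) ≥ R(x). Suppose sup_{x∈A} R(x) < ∞ and the family satisfies the engulfing property: whenever x, z ∈ A with 𝒞_x ∩ 𝒞_z ≠ ∅ and R(z) ≤ 2R(x), one has 𝒞_z ⊂ K𝒞_x. Then there exists a countable (possibly finite) collection of points x_i ∈ A such that the capsules {𝒞_{x_i}} are pairwise disjoint, A's capsule union satisfies ⋃_{x∈A} 𝒞_x ⊂ ⋃_i K𝒞_{x_i}, and consequently |⋃_{x∈A} 𝒞_x| ≤ Σ_i |K𝒞_{x_i}|.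 -/
open MeasureTheory Metric Filter Real
open scoped ENNReal Topology

noncomputable section

/-- Lemma 3.7, Vitali-type covering lemma for capsules. If the capsules of
a set `A` have bounded radii and satisfy the engulfing property with constant `K ≥ 1`, then
there is a countable subfamily of pairwise disjoint capsules whose `K`-dilates cover
`⋃_{x∈A} 𝒞_x`; consequently `|⋃_{x∈A} 𝒞_x| ≤ Σ_i |K𝒞_{x_i}|`. -/
theorem statement11 (K : ℝ) (hK : 1 ≤ K) (A : Set E3)
    (R L : E3 → ℝ) (e : E3 → E3)
    (hR : ∀ x ∈ A, 0 < R x) (hL : ∀ x ∈ A, R x ≤ L x)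
    (hbdd : ∃ M : ℝ, ∀ x ∈ A, R x ≤ M)
    (heng : ∀ x ∈ A, ∀ z ∈ A,
      (capsule (R x) (L x) (e x) x ∩ capsule (R z) (L z) (e z) z).Nonempty →
      R z ≤ 2 * R x →
      capsule (R z) (L z) (e z) z ⊆ capsule (K * R x) (K * L x) (e x) x) :
    ∃ S : Set E3, S ⊆ A ∧ S.Countable ∧
      (S.Pairwise fun a b =>
        Disjoint (capsule (R a) (L a) (e a) a) (capsule (R b) (L b) (e b) b)) ∧
      (⋃ x ∈ A, capsule (R x) (L x) (e x) x) ⊆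
        (⋃ x ∈ S, capsule (K * R x) (K * L x) (e x) x) ∧
      volume (⋃ x ∈ A, capsule (R x) (L x) (e x) x) ≤
        ∑' x : S, volume (capsule (K * R x.1) (K * L x.1) (e x.1) x.1) := by
  obtain ⟨M, hM⟩ := hbdd
  have hne : ∀ x ∈ A, x ∈ capsule (R x) (L x) (e x) x := by
    intro a ha
    have h1 := hR a ha
    have h2 := hL a ha
    have h0 : (0:ℝ) ∈ Set.Icc (-(L a - R a)) (L a - R a) := ⟨by linarith, by linarith⟩
    refine Set.mem_biUnion h0 ?_
    have heq : a + (0:ℝ) • e a = a := by simp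
    rw [heq]
    exact mem_ball_self h1
  obtain ⟨S, hSA, hdisj, hcov⟩ :=
    Vitali.exists_disjoint_subfamily_covering_enlargement
      (fun x => capsule (R x) (L x) (e x) x) A R 2 one_lt_two
      (fun a ha => (hR a ha).le) M hM
      (fun a ha => ⟨a, hne a ha⟩)
  have hopen : ∀ x ∈ A, IsOpen (capsule (R x) (L x) (e x) x) := fun x _ =>
    isOpen_biUnion fun t _ => isOpen_ball
  have hScount : S.Countable :=
    hdisj.countable_of_isOpen (fun x hx => hopen x (hSA hx))
      (fun x hx => ⟨x, hne x (hSA hx)⟩)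
  have hsubset : (⋃ x ∈ A, capsule (R x) (L x) (e x) x) ⊆
      ⋃ x ∈ S, capsule (K * R x) (K * L x) (e x) x := by
    intro y hy
    obtain ⟨a, ha, hya⟩ := Set.mem_iUnion₂.1 hy
    obtain ⟨b, hb, hint, hle⟩ := hcov a ha
    exact Set.mem_iUnion₂.2 ⟨b, hb,
      heng b (hSA hb) a ha (by rwa [Set.inter_comm] at hint) hle hya⟩
  refine ⟨S, hSA, hScount, hdisj, hsubset, ?_⟩
  calc volume (⋃ x ∈ A, capsule (R x) (L x) (e x) x)
      ≤ volume (⋃ x ∈ S, capsule (K * R x) (K * L x) (e x) x) := measure_mono hsubset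
    _ ≤ ∑' x : S, volume (capsule (K * R x.1) (K * L x.1) (e x.1) x.1) :=
        measure_biUnion_le volume hScount _
end
end

section
/- Let ψ: ℝ³ → ℝ³ be a C¹ vector field, let u = curl ψ, let R > 0, and let ψ̄ = ⨍_{B_R(0)} ψ dy. Then ∫_{B_R(0)} (ψ(y) − ψ̄) · (e₁ × y) dy = ∫_{B_R(0)} u(y) · (y₁ y) dy, where y = (y₁, y₂, y₃) and e₁ is the first standard basis vector. -/
open MeasureTheory Metric Filter Real
open scoped ENNReal Topology

noncomputable section

section Aux

lemma norm_sq_eq' (x : E3) : ‖x‖^2 = ∑ j, (x j)^2 := by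
  rw [EuclideanSpace.norm_eq, sq_sqrt] ; · simp [sq_abs]
  positivity

lemma path_affine (i : Fin 3) (z : Fin 2 → ℝ) (t : ℝ) :
    ((MeasurableEquiv.toLp 2 (Fin 3 → ℝ)) (i.insertNth t z) : E3)
      = (MeasurableEquiv.toLp 2 (Fin 3 → ℝ)) (i.insertNth 0 z)
        + t • EuclideanSpace.single i 1 := by
  apply PiLp.ext
  intro j
  simp only [PiLp.add_apply, PiLp.smul_apply, smul_eq_mul]
  have hc : ∀ w : Fin 3 → ℝ, ((MeasurableEquiv.toLp 2 (Fin 3 → ℝ)) w) j = w j :=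
    fun _ => rfl
  rw [hc, hc]
  refine Fin.succAboveCases i ?_ ?_ j
  · simp [EuclideanSpace.single_apply]
  · intro j
    simp [EuclideanSpace.single_apply, Fin.succAbove_ne i j]

/-- Key integration by parts: integral over the ball of a partial derivative of a C¹
function vanishing on the sphere is zero. -/
lemma key_ibp {R : ℝ} (hR : 0 < R) (i : Fin 3) (g : E3 → ℝ) (hg : ContDiff ℝ 1 g)
    (h0 : ∀ y : E3, ‖y‖ = R → g y = 0) :
    ∫ y in ball (0 : E3) R, fderiv ℝ g y (EuclideanSpace.single i 1) = 0 := by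
  set v : E3 := EuclideanSpace.single i 1 with hv
  have hgd : Differentiable ℝ g := hg.differentiable one_ne_zero
  have hcont : Continuous fun y : E3 => fderiv ℝ g y v :=
    (hg.continuous_fderiv one_ne_zero).clm_apply continuous_const
  have hIntOn : IntegrableOn (fun y : E3 => fderiv ℝ g y v) (ball (0 : E3) R) volume :=
    (hcont.locallyIntegrable.integrableOn_isCompact (isCompact_closedBall (0:E3) R)).mono_set
      ball_subset_closedBall
  set G : E3 → ℝ := (ball (0 : E3) R).indicator (fun y => fderiv ℝ g y v) with hG
  have hGint : Integrable G volume := hIntOn.integrable_indicator measurableSet_ball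
  rw [← integral_indicator measurableSet_ball, ← hG]
  have e1m : MeasurePreserving (MeasurableEquiv.toLp 2 (Fin 3 → ℝ)) volume volume :=
    (EuclideanSpace.volume_preserving_symm_measurableEquiv_toLp (Fin 3)).symm
  have e2m := (MeasureTheory.volume_preserving_piFinSuccAbove (fun _ : Fin 3 => ℝ) i).symm
  set eq1 := (MeasurableEquiv.toLp 2 (Fin 3 → ℝ)) with heq1
  set eq2 := (MeasurableEquiv.piFinSuccAbove (fun _ : Fin 3 => ℝ) i).symm with heq2
  have h1 : ∫ y, G y = ∫ x : Fin 3 → ℝ, G (eq1 x) :=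
    (e1m.integral_comp (MeasurableEquiv.measurableEmbedding _) G).symm
  have h2 : ∫ x : Fin 3 → ℝ, G (eq1 x) = ∫ w : ℝ × (Fin 2 → ℝ), G (eq1 (eq2 w)) :=
    (e2m.integral_comp (MeasurableEquiv.measurableEmbedding _) _).symm
  rw [h1, h2]
  have hint2 : Integrable (fun w : ℝ × (Fin 2 → ℝ) => G (eq1 (eq2 w))) volume := by
    have : Integrable ((G ∘ eq1) ∘ eq2) volume := by
      rw [MeasurePreserving.integrable_comp_emb e2m (MeasurableEquiv.measurableEmbedding _)]
      rw [MeasurePreserving.integrable_comp_emb e1m (MeasurableEquiv.measurableEmbedding _)]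
      exact hGint
    exact this
  rw [Measure.volume_eq_prod] at hint2
  rw [Measure.volume_eq_prod, integral_prod_symm _ hint2]
  -- now show each inner integral vanishes
  have inner_zero : ∀ z : Fin 2 → ℝ, (∫ t : ℝ, G (eq1 (eq2 (t, z)))) = 0 := by
    intro z
    set c : ℝ := ∑ j, (z j)^2 with hc
    have hc0 : 0 ≤ c := by positivity
    set Y0 : E3 := eq1 (i.insertNth 0 z) with hY0
    have hpath : ∀ t : ℝ, eq1 (eq2 (t, z)) = Y0 + t • v := by
      intro t
      have : eq2 (t, z) = i.insertNth t z := rfl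
      rw [this, heq1, hY0, heq1]
      exact path_affine i z t
    have hnorm : ∀ t : ℝ, ‖Y0 + t • v‖^2 = t^2 + c := by
      intro t
      rw [← hpath t, norm_sq_eq']
      have hcoord : (fun j => ((eq1 (eq2 (t, z)) : E3) j)^2) = fun j => (i.insertNth t z j)^2 := rfl
      rw [hcoord]
      rw [Fin.sum_univ_succAbove _ i]
      simp [Fin.insertNth_apply_same, Fin.insertNth_apply_succAbove, hc, Fin.sum_univ_two]
    have hmem : ∀ t : ℝ, (Y0 + t • v ∈ ball (0:E3) R) ↔ t^2 < R^2 - c := by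
      intro t
      rw [mem_ball_zero_iff]
      constructor
      · intro h
        have := pow_lt_pow_left₀ h (norm_nonneg _) two_ne_zero
        rw [hnorm t] at this; linarith
      · intro h
        have h2 : ‖Y0 + t • v‖^2 < R^2 := by rw [hnorm t]; linarith
        nlinarith [norm_nonneg (Y0 + t • v)]
    have hder : ∀ t : ℝ, HasDerivAt (fun s => g (Y0 + s • v))
        (fderiv ℝ g (Y0 + t • v) v) t := by
      intro t
      have hp : HasDerivAt (fun s : ℝ => Y0 + s • v) v t := by
        simpa using ((hasDerivAt_id t).smul_const v).const_add Y0
      exact ((hgd _).hasFDerivAt.comp_hasDerivAt t hp)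
    have hindrw : ∀ t : ℝ, G (eq1 (eq2 (t, z)))
        = Set.indicator {t : ℝ | t^2 < R^2 - c} (fun s => fderiv ℝ g (Y0 + s • v) v) t := by
      intro t
      rw [hpath t, hG]
      by_cases hmem' : Y0 + t • v ∈ ball (0:E3) R
      · rw [Set.indicator_of_mem hmem',
          Set.indicator_of_mem (s := {t : ℝ | t^2 < R^2 - c})
            (Set.mem_setOf.mpr ((hmem t).mp hmem'))]
      · rw [Set.indicator_of_notMem hmem',
          Set.indicator_of_notMem (s := {t : ℝ | t^2 < R^2 - c})]
        intro hcon
        exact hmem' ((hmem t).mpr hcon)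
    simp_rw [hindrw]
    by_cases hcR : R^2 - c ≤ 0
    · have : {t : ℝ | t^2 < R^2 - c} = ∅ := by
        ext t; simp only [Set.mem_setOf_eq, Set.mem_empty_iff_false, iff_false, not_lt]
        nlinarith
      rw [this]; simp
    · push_neg at hcR
      set s : ℝ := Real.sqrt (R^2 - c) with hs
      have hs0 : 0 < s := Real.sqrt_pos.mpr hcR
      have hset : {t : ℝ | t^2 < R^2 - c} = Set.Ioo (-s) s := by
        ext t
        simp only [Set.mem_setOf_eq, Set.mem_Ioo]
        rw [← Real.sq_sqrt hcR.le, ← hs]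
        constructor
        · intro h; exact abs_lt_of_sq_lt_sq' h hs0.le
        · intro h; exact sq_lt_sq' h.1 h.2
      rw [hset, integral_indicator measurableSet_Ioo, ← integral_Ioc_eq_integral_Ioo,
        ← intervalIntegral.integral_of_le (by linarith : -s ≤ s)]
      have hval : ∀ t : ℝ, t^2 = R^2 - c → g (Y0 + t • v) = 0 := by
        intro t ht
        apply h0
        have : ‖Y0 + t • v‖^2 = R^2 := by rw [hnorm t]; linarith
        rw [← Real.sqrt_sq (norm_nonneg _), this, Real.sqrt_sq hR.le]
      rw [intervalIntegral.integral_eq_sub_of_hasDerivAt (fun t _ => hder t)]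
      · rw [hval s (by rw [hs, Real.sq_sqrt hcR.le]), hval (-s) (by rw [neg_pow]; simp [hs, Real.sq_sqrt hcR.le])]
        ring
      · apply Continuous.intervalIntegrable
        exact hcont.comp ((continuous_const.add (continuous_id.smul continuous_const)))
  simp_rw [inner_zero]
  simp

lemma coord_clm_eq (j : Fin 3) :
    (fun y : E3 => y j) = ⇑(EuclideanSpace.proj (𝕜 := ℝ) j) := rfl

lemma diff_coord (j : Fin 3) : Differentiable ℝ (fun y : E3 => y j) := by
  rw [coord_clm_eq]; exact (EuclideanSpace.proj (𝕜 := ℝ) j).differentiable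

lemma contDiff_coord (j : Fin 3) : ContDiff ℝ 1 (fun y : E3 => y j) := by
  rw [coord_clm_eq]; exact (EuclideanSpace.proj (𝕜 := ℝ) j).contDiff

lemma pd_coord (i j : Fin 3) (y : E3) :
    fderiv ℝ (fun y : E3 => y j) y (EuclideanSpace.single i 1) = if j = i then 1 else 0 := by
  rw [coord_clm_eq, ContinuousLinearMap.fderiv]
  exact EuclideanSpace.single_apply i 1 j

variable {ψ : E3 → E3}

lemma contDiff_psi_comp (hψ : ContDiff ℝ 1 ψ) (j : Fin 3) : ContDiff ℝ 1 (fun y => ψ y j) :=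
  (EuclideanSpace.proj (𝕜 := ℝ) j).contDiff.comp hψ

lemma diff_psi_comp (hψ : ContDiff ℝ 1 ψ) (j : Fin 3) : Differentiable ℝ (fun y => ψ y j) :=
  (contDiff_psi_comp hψ j).differentiable one_ne_zero

lemma pd_psi (hψ : ContDiff ℝ 1 ψ) (i j : Fin 3) (y : E3) :
    fderiv ℝ (fun y => ψ y j) y (EuclideanSpace.single i 1)
      = fderiv ℝ ψ y (EuclideanSpace.single i 1) j := by
  have h : (fun y => ψ y j) = (EuclideanSpace.proj (𝕜 := ℝ) j) ∘ ψ := rfl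
  rw [h, fderiv_comp (x := y) (EuclideanSpace.proj (𝕜 := ℝ) j).differentiableAt
    (hψ.differentiable one_ne_zero y), ContinuousLinearMap.fderiv]
  rfl

lemma pd_mul {f g : E3 → ℝ} {y : E3} (hf : DifferentiableAt ℝ f y)
    (hg : DifferentiableAt ℝ g y) (v : E3) :
    fderiv ℝ (fun y => f y * g y) y v
      = fderiv ℝ f y v * g y + f y * fderiv ℝ g y v := by
  rw [fderiv_fun_mul hf hg]
  simp [smul_eq_mul]
  ring

lemma pd_sub {f g : E3 → ℝ} {y : E3} (hf : DifferentiableAt ℝ f y)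
    (hg : DifferentiableAt ℝ g y) (v : E3) :
    fderiv ℝ (fun y => f y - g y) y v = fderiv ℝ f y v - fderiv ℝ g y v := by
  rw [fderiv_fun_sub hf hg]; rfl

lemma pd_pow {f : E3 → ℝ} {y : E3} (hf : DifferentiableAt ℝ f y) (n : ℕ) (v : E3) :
    fderiv ℝ (fun y => f y ^ (n + 1)) y v
      = (n + 1 : ℝ) * f y ^ n * fderiv ℝ f y v := by
  induction n with
  | zero => simp
  | succ m ih =>
    have h : (fun y => f y ^ (m + 2)) = fun y => f y ^ (m+1) * f y := by
      funext y; ring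
    rw [h, pd_mul (hf.fun_pow (m+1)) hf, ih]
    push_cast
    ring

/-- The auxiliary vector field `F = ψ × (y₀ y)`. -/
def Fvec (ψ : E3 → E3) : Fin 3 → E3 → ℝ :=
  ![fun y => y 0 * (ψ y 1 * y 2 - ψ y 2 * y 1),
    fun y => ψ y 2 * (y 0)^2 - ψ y 0 * (y 0 * y 2),
    fun y => ψ y 0 * (y 0 * y 1) - ψ y 1 * (y 0)^2]

/-- Squared norm as polynomial. -/
def Nsq (y : E3) : ℝ := ∑ j, (y j)^2

/-- Cutoff. -/
def theta (R : ℝ) (n : ℕ) (y : E3) : ℝ := 1 - ((R^2)⁻¹ * Nsq y)^(n+1)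

/-- The divergence of `F`. -/
def Dfun (ψ : E3 → E3) (y : E3) : ℝ :=
  (inner ℝ (curl3 ψ y) ((y 0) • y) : ℝ) - (inner ℝ (ψ y) (cross3 e1 y) : ℝ)

lemma Nsq_eq_norm (y : E3) : Nsq y = ‖y‖^2 := by
  rw [Nsq, EuclideanSpace.norm_eq, sq_sqrt] ; · simp [sq_abs]
  positivity

lemma contDiff_Nsq : ContDiff ℝ 1 Nsq := by
  apply ContDiff.sum (fun j _ => ?_)
  exact (contDiff_coord j).pow 2

lemma diff_Nsq : Differentiable ℝ Nsq := contDiff_Nsq.differentiable one_ne_zero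

lemma pd_Nsq (i : Fin 3) (y : E3) :
    fderiv ℝ Nsq y (EuclideanSpace.single i 1) = 2 * y i := by
  have h : Nsq = fun y : E3 => ∑ j : Fin 3, (y j)^2 := rfl
  rw [h]
  have hdiff : ∀ j ∈ Finset.univ, DifferentiableAt ℝ (fun y : E3 => (y j)^2) y :=
    fun j _ => ((diff_coord j) y).pow 2
  rw [fderiv_fun_sum hdiff]
  rw [ContinuousLinearMap.sum_apply]
  have hterm : ∀ j : Fin 3, fderiv ℝ (fun y : E3 => (y j)^2) y (EuclideanSpace.single i 1)
      = 2 * y j * (if j = i then 1 else 0) := by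
    intro j
    have h2 : (fun y : E3 => (y j)^2) = fun y : E3 => (y j)^(1+1) := by norm_num
    rw [h2, pd_pow ((diff_coord j) y) 1, pd_coord]
    norm_num
  simp_rw [hterm]
  rw [Fin.sum_univ_three]
  fin_cases i <;> simp

lemma contDiff_theta (R : ℝ) (n : ℕ) : ContDiff ℝ 1 (theta R n) := by
  have : theta R n = fun y => 1 - ((R^2)⁻¹ * Nsq y)^(n+1) := rfl
  rw [this]
  exact contDiff_const.sub ((contDiff_const.mul contDiff_Nsq).pow _)

lemma diff_theta (R : ℝ) (n : ℕ) : Differentiable ℝ (theta R n) :=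
  (contDiff_theta R n).differentiable one_ne_zero

lemma pd_theta (R : ℝ) (n : ℕ) (i : Fin 3) (y : E3) :
    fderiv ℝ (theta R n) y (EuclideanSpace.single i 1)
      = -((n + 1 : ℝ) * ((R^2)⁻¹ * Nsq y)^n * ((R^2)⁻¹ * (2 * y i))) := by
  have h : theta R n = fun y => 1 - (fun z : E3 => (R^2)⁻¹ * Nsq z) y ^ (n+1) := rfl
  rw [h]
  have hd : DifferentiableAt ℝ (fun z : E3 => (R^2)⁻¹ * Nsq z) y :=
    (differentiableAt_const _).mul (diff_Nsq y)
  have hlin : fderiv ℝ (fun z : E3 => (R^2)⁻¹ * Nsq z) y (EuclideanSpace.single i 1)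
      = (R^2)⁻¹ * (2 * y i) := by
    rw [fderiv_const_mul (diff_Nsq y), ContinuousLinearMap.smul_apply, pd_Nsq, smul_eq_mul]
  rw [fderiv_const_sub, ContinuousLinearMap.neg_apply, pd_pow hd n, hlin]

lemma equiv_symm_apply (v : Fin 3 → ℝ) (j : Fin 3) :
    ((EuclideanSpace.equiv (Fin 3) ℝ).symm v) j = v j := rfl

lemma Dfun_eq (ψ : E3 → E3) (y : E3) :
    Dfun ψ y
      = y 0 * y 0 * (fderiv ℝ ψ y (EuclideanSpace.single 1 1) 2
            - fderiv ℝ ψ y (EuclideanSpace.single 2 1) 1)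
        + y 0 * y 1 * (fderiv ℝ ψ y (EuclideanSpace.single 2 1) 0
            - fderiv ℝ ψ y (EuclideanSpace.single 0 1) 2)
        + y 0 * y 2 * (fderiv ℝ ψ y (EuclideanSpace.single 0 1) 1
            - fderiv ℝ ψ y (EuclideanSpace.single 1 1) 0)
        + (ψ y 1 * y 2 - ψ y 2 * y 1) := by
  simp only [Dfun, curl3, cross3, e1, PiLp.inner_apply, RCLike.inner_apply, starRingEnd_apply,
    star_trivial, Fin.sum_univ_three, equiv_symm_apply, PiLp.smul_apply, smul_eq_mul,
    Matrix.cons_val_zero, Matrix.cons_val_one, Matrix.head_cons, Matrix.cons_val_two,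
    Matrix.tail_cons, EuclideanSpace.single_apply]
  norm_num [Fin.ext_iff]
  ring

lemma Fvec_zero (ψ : E3 → E3) :
    Fvec ψ 0 = fun y => y 0 * (ψ y 1 * y 2 - ψ y 2 * y 1) := rfl
lemma Fvec_one (ψ : E3 → E3) :
    Fvec ψ 1 = fun y => ψ y 2 * (y 0)^2 - ψ y 0 * (y 0 * y 2) := rfl
lemma Fvec_two (ψ : E3 → E3) :
    Fvec ψ 2 = fun y => ψ y 0 * (y 0 * y 1) - ψ y 1 * (y 0)^2 := rfl

lemma contDiff_Fvec {ψ : E3 → E3} (hψ : ContDiff ℝ 1 ψ) (i : Fin 3) :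
    ContDiff ℝ 1 (Fvec ψ i) := by
  have cd0 : ContDiff ℝ 1 (Fvec ψ 0) := by
    rw [Fvec_zero]
    exact (contDiff_coord 0).mul
      (((contDiff_psi_comp hψ 1).mul (contDiff_coord 2)).sub
        ((contDiff_psi_comp hψ 2).mul (contDiff_coord 1)))
  have cd1 : ContDiff ℝ 1 (Fvec ψ 1) := by
    rw [Fvec_one]
    exact ((contDiff_psi_comp hψ 2).mul ((contDiff_coord 0).pow 2)).sub
      ((contDiff_psi_comp hψ 0).mul ((contDiff_coord 0).mul (contDiff_coord 2)))
  have cd2 : ContDiff ℝ 1 (Fvec ψ 2) := by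
    rw [Fvec_two]
    exact ((contDiff_psi_comp hψ 0).mul ((contDiff_coord 0).mul (contDiff_coord 1))).sub
      ((contDiff_psi_comp hψ 1).mul ((contDiff_coord 0).pow 2))
  fin_cases i
  · exact cd0
  · exact cd1
  · exact cd2

lemma sum_pd {ψ : E3 → E3} (hψ : ContDiff ℝ 1 ψ) (R : ℝ) (n : ℕ) (y : E3) :
    ∑ i : Fin 3, fderiv ℝ (fun z => theta R n z * Fvec ψ i z) y (EuclideanSpace.single i 1)
      = theta R n y * Dfun ψ y := by
  have hdc : ∀ j : Fin 3, DifferentiableAt ℝ (fun z : E3 => z j) y := fun j => diff_coord j y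
  have hdψ : ∀ j : Fin 3, DifferentiableAt ℝ (fun z => ψ z j) y := fun j => diff_psi_comp hψ j y
  have hdθ : DifferentiableAt ℝ (theta R n) y := diff_theta R n y
  have hdF : ∀ i, DifferentiableAt ℝ (Fvec ψ i) y :=
    fun i => ((contDiff_Fvec hψ i).differentiable one_ne_zero) y
  have hsq : (fun z : E3 => (z 0)^2) = fun z : E3 => (z 0)^(1+1) := by norm_num
  -- derivative of F₀ in direction e₀
  have pdF0 : fderiv ℝ (Fvec ψ 0) y (EuclideanSpace.single 0 1)
      = (ψ y 1 * y 2 - ψ y 2 * y 1)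
        + y 0 * ((fderiv ℝ ψ y (EuclideanSpace.single 0 1) 1) * y 2
            - (fderiv ℝ ψ y (EuclideanSpace.single 0 1) 2) * y 1) := by
    rw [Fvec_zero ψ, pd_mul (hdc 0) (((hdψ 1).fun_mul (hdc 2)).fun_sub ((hdψ 2).fun_mul (hdc 1))),
      pd_sub ((hdψ 1).fun_mul (hdc 2)) ((hdψ 2).fun_mul (hdc 1)),
      pd_mul (hdψ 1) (hdc 2), pd_mul (hdψ 2) (hdc 1),
      pd_coord, pd_coord, pd_coord, pd_psi hψ, pd_psi hψ]
    norm_num [Fin.ext_iff]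
  have pdF1 : fderiv ℝ (Fvec ψ 1) y (EuclideanSpace.single 1 1)
      = (fderiv ℝ ψ y (EuclideanSpace.single 1 1) 2) * (y 0)^2
        - (fderiv ℝ ψ y (EuclideanSpace.single 1 1) 0) * (y 0 * y 2) := by
    rw [Fvec_one ψ, pd_sub ((hdψ 2).fun_mul ((hdc 0).fun_pow 2)) ((hdψ 0).fun_mul ((hdc 0).fun_mul (hdc 2))),
      pd_mul (hdψ 2) ((hdc 0).fun_pow 2), pd_mul (hdψ 0) ((hdc 0).fun_mul (hdc 2)),
      pd_mul (hdc 0) (hdc 2), hsq, pd_pow (hdc 0) 1,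
      pd_coord, pd_coord, pd_psi hψ, pd_psi hψ]
    norm_num [Fin.ext_iff]
  have pdF2 : fderiv ℝ (Fvec ψ 2) y (EuclideanSpace.single 2 1)
      = (fderiv ℝ ψ y (EuclideanSpace.single 2 1) 0) * (y 0 * y 1)
        - (fderiv ℝ ψ y (EuclideanSpace.single 2 1) 1) * (y 0)^2 := by
    rw [Fvec_two ψ, pd_sub ((hdψ 0).fun_mul ((hdc 0).fun_mul (hdc 1))) ((hdψ 1).fun_mul ((hdc 0).fun_pow 2)),
      pd_mul (hdψ 0) ((hdc 0).fun_mul (hdc 1)), pd_mul (hdψ 1) ((hdc 0).fun_pow 2),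
      pd_mul (hdc 0) (hdc 1), hsq, pd_pow (hdc 0) 1,
      pd_coord, pd_coord, pd_psi hψ, pd_psi hψ]
    norm_num [Fin.ext_iff]
  rw [Fin.sum_univ_three,
    pd_mul hdθ (hdF 0), pd_mul hdθ (hdF 1), pd_mul hdθ (hdF 2),
    pdF0, pdF1, pdF2, pd_theta, pd_theta, pd_theta, Dfun_eq,
    Fvec_zero ψ, Fvec_one ψ, Fvec_two ψ]
  ring

lemma integrableOn_ball_cont {R : ℝ} {f : E3 → ℝ} (hf : Continuous f) :
    IntegrableOn f (ball (0 : E3) R) volume :=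
  (hf.locallyIntegrable.integrableOn_isCompact (isCompact_closedBall (0:E3) R)).mono_set
    ball_subset_closedBall

lemma coord_int_zero (R : ℝ) (j : Fin 3) : (∫ y in ball (0 : E3) R, y j) = 0 := by
  have h : (∫ y in ball (0 : E3) R, y j)
      = ∫ y : E3, (ball (0:E3) R).indicator (fun y : E3 => y j) y :=
    (integral_indicator measurableSet_ball).symm
  have hneg : ∀ y : E3, (ball (0:E3) R).indicator (fun y : E3 => y j) (-y)
      = -((ball (0:E3) R).indicator (fun y : E3 => y j) y) := by
    intro y
    by_cases hy : y ∈ ball (0:E3) R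
    · have hy' : -y ∈ ball (0:E3) R := by
        rw [mem_ball_zero_iff] at hy ⊢; simpa using hy
      rw [Set.indicator_of_mem hy, Set.indicator_of_mem hy']
      simp
    · have hy' : -y ∉ ball (0:E3) R := by
        rw [mem_ball_zero_iff] at hy ⊢; simpa using hy
      rw [Set.indicator_of_notMem hy, Set.indicator_of_notMem hy']
      simp
  have h2 : (∫ y : E3, (ball (0:E3) R).indicator (fun y : E3 => y j) y)
      = ∫ y : E3, (ball (0:E3) R).indicator (fun y : E3 => y j) (-y) :=
    (integral_neg_eq_self _ _).symm
  have key : (∫ y : E3, (ball (0:E3) R).indicator (fun y : E3 => y j) y)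
      = -(∫ y : E3, (ball (0:E3) R).indicator (fun y : E3 => y j) y) := by
    conv_lhs => rw [h2]
    simp_rw [hneg]
    rw [integral_neg]
  rw [h]
  linarith [key]

lemma cont_pd_psi {ψ : E3 → E3} (hψ : ContDiff ℝ 1 ψ) (i j : Fin 3) :
    Continuous (fun y => fderiv ℝ ψ y (EuclideanSpace.single i 1) j) :=
  (EuclideanSpace.proj (𝕜 := ℝ) j).continuous.comp
    ((hψ.continuous_fderiv one_ne_zero).clm_apply continuous_const)

lemma cont_coord (j : Fin 3) : Continuous (fun y : E3 => y j) :=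
  (EuclideanSpace.proj (𝕜 := ℝ) j).continuous

lemma cont_psi_comp {ψ : E3 → E3} (hψ : ContDiff ℝ 1 ψ) (j : Fin 3) :
    Continuous (fun y => ψ y j) :=
  (EuclideanSpace.proj (𝕜 := ℝ) j).continuous.comp (hψ.continuous)

lemma cont_Dfun {ψ : E3 → E3} (hψ : ContDiff ℝ 1 ψ) : Continuous (Dfun ψ) := by
  have h : Dfun ψ = fun y =>
      y 0 * y 0 * (fderiv ℝ ψ y (EuclideanSpace.single 1 1) 2
            - fderiv ℝ ψ y (EuclideanSpace.single 2 1) 1)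
        + y 0 * y 1 * (fderiv ℝ ψ y (EuclideanSpace.single 2 1) 0
            - fderiv ℝ ψ y (EuclideanSpace.single 0 1) 2)
        + y 0 * y 2 * (fderiv ℝ ψ y (EuclideanSpace.single 0 1) 1
            - fderiv ℝ ψ y (EuclideanSpace.single 1 1) 0)
        + (ψ y 1 * y 2 - ψ y 2 * y 1) := funext fun y => Dfun_eq ψ y
  rw [h]
  exact ((((cont_coord 0).mul (cont_coord 0)).mul
      ((cont_pd_psi hψ 1 2).sub (cont_pd_psi hψ 2 1))).add
    ((((cont_coord 0).mul (cont_coord 1)).mul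
      ((cont_pd_psi hψ 2 0).sub (cont_pd_psi hψ 0 2))).add
    ((((cont_coord 0).mul (cont_coord 2)).mul
      ((cont_pd_psi hψ 0 1).sub (cont_pd_psi hψ 1 0)))))).add
    (((cont_psi_comp hψ 1).mul (cont_coord 2)).sub
      ((cont_psi_comp hψ 2).mul (cont_coord 1))) |>.congr (by intro y; simp only [Pi.mul_apply, Pi.add_apply, Pi.sub_apply]; ring)

lemma cont_theta (R : ℝ) (n : ℕ) : Continuous (theta R n) :=
  (contDiff_theta R n).continuous

lemma theta_int_zero {ψ : E3 → E3} (hψ : ContDiff ℝ 1 ψ) {R : ℝ} (hR : 0 < R) (n : ℕ) :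
    (∫ y in ball (0 : E3) R, theta R n y * Dfun ψ y) = 0 := by
  have hfun : (fun y => theta R n y * Dfun ψ y)
      = fun y => ∑ i : Fin 3,
          fderiv ℝ (fun z => theta R n z * Fvec ψ i z) y (EuclideanSpace.single i 1) :=
    funext fun y => (sum_pd hψ R n y).symm
  rw [hfun]
  have hcd : ∀ i : Fin 3, ContDiff ℝ 1 (fun z => theta R n z * Fvec ψ i z) :=
    fun i => (contDiff_theta R n).mul (contDiff_Fvec hψ i)
  rw [integral_finset_sum]
  · apply Finset.sum_eq_zero
    intro i _
    apply key_ibp hR i _ (hcd i)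
    intro y hy
    have hNy : Nsq y = R^2 := by rw [Nsq_eq_norm, hy]
    have : theta R n y = 0 := by
      rw [theta, hNy, inv_mul_cancel₀ (by positivity)]
      simp
    have hz : (fun z => theta R n z * Fvec ψ i z) y = 0 := by
      simp only [this, zero_mul]
    exact hz
  · intro i _
    apply integrableOn_ball_cont
    exact ((hcd i).continuous_fderiv one_ne_zero).clm_apply continuous_const

lemma div_int_zero {ψ : E3 → E3} (hψ : ContDiff ℝ 1 ψ) {R : ℝ} (hR : 0 < R) :
    (∫ y in ball (0 : E3) R, Dfun ψ y) = 0 := by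
  have hDc : Continuous (Dfun ψ) := cont_Dfun hψ
  have htend : Tendsto (fun n : ℕ => ∫ y in ball (0 : E3) R, theta R n y * Dfun ψ y)
      atTop (𝓝 (∫ y in ball (0 : E3) R, Dfun ψ y)) := by
    apply tendsto_integral_of_dominated_convergence (fun y => |Dfun ψ y|)
    · exact fun n => ((cont_theta R n).mul hDc).aestronglyMeasurable
    · exact (integrableOn_ball_cont hDc.abs)
    · intro n
      filter_upwards [ae_restrict_mem measurableSet_ball] with y hy
      rw [mem_ball_zero_iff] at hy
      have hq0 : 0 ≤ (R^2)⁻¹ * Nsq y := by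
        rw [Nsq_eq_norm]; positivity
      have hq1 : (R^2)⁻¹ * Nsq y < 1 := by
        rw [Nsq_eq_norm]
        rw [inv_mul_lt_iff₀ (by positivity), mul_one]
        exact pow_lt_pow_left₀ hy (norm_nonneg _) two_ne_zero
      have hθ0 : 0 ≤ theta R n y := by
        rw [theta]
        have := pow_le_one₀ hq0 hq1.le (n := n+1)
        linarith
      have hθ1 : theta R n y ≤ 1 := by
        rw [theta]
        have := pow_nonneg hq0 (n+1)
        linarith
      rw [Real.norm_eq_abs, abs_mul]
      calc |theta R n y| * |Dfun ψ y| ≤ 1 * |Dfun ψ y| := by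
            apply mul_le_mul_of_nonneg_right _ (abs_nonneg _)
            rw [abs_of_nonneg hθ0]; exact hθ1
        _ = |Dfun ψ y| := one_mul _
    · filter_upwards [ae_restrict_mem measurableSet_ball] with y hy
      rw [mem_ball_zero_iff] at hy
      have hq0 : 0 ≤ (R^2)⁻¹ * Nsq y := by rw [Nsq_eq_norm]; positivity
      have hq1 : (R^2)⁻¹ * Nsq y < 1 := by
        rw [Nsq_eq_norm, inv_mul_lt_iff₀ (by positivity), mul_one]
        exact pow_lt_pow_left₀ hy (norm_nonneg _) two_ne_zero
      have h1 : Tendsto (fun n : ℕ => ((R^2)⁻¹ * Nsq y)^(n+1)) atTop (𝓝 0) :=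
        (tendsto_pow_atTop_nhds_zero_of_lt_one hq0 hq1).comp (tendsto_add_atTop_nat 1)
      have h2 : Tendsto (fun n : ℕ => theta R n y) atTop (𝓝 1) := by
        have := h1.const_sub 1
        simpa [theta] using this
      have := h2.mul_const (Dfun ψ y)
      simpa using this
  have hzero : (fun n : ℕ => ∫ y in ball (0 : E3) R, theta R n y * Dfun ψ y)
      = fun _ : ℕ => (0 : ℝ) := funext fun n => theta_int_zero hψ hR n
  rw [hzero] at htend
  exact (tendsto_nhds_unique tendsto_const_nhds htend).symm

end Aux

/-- integration by parts identity for the stream function. For a `C¹`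
vector field `ψ` with `u = curl ψ`,
`∫_{B_R} (ψ(y) − ψ̄) · (e₁ × y) dy = ∫_{B_R} u(y) · (y₁ y) dy`. -/
theorem statement13 (ψ : E3 → E3) (hψ : ContDiff ℝ 1 ψ) (R : ℝ) (hR : 0 < R) :
    (∫ y in ball (0 : E3) R,
        (inner ℝ (ψ y - ⨍ z in ball (0 : E3) R, ψ z) (cross3 e1 y) : ℝ)) =
      ∫ y in ball (0 : E3) R, (inner ℝ (curl3 ψ y) ((y 0) • y) : ℝ) := by
  set c : E3 := ⨍ z in ball (0:E3) R, ψ z with hc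
  have hBeq : (fun y => (inner ℝ (ψ y) (cross3 e1 y) : ℝ))
      = fun y => ψ y 2 * y 1 - ψ y 1 * y 2 := by
    funext y
    simp only [cross3, e1, PiLp.inner_apply, RCLike.inner_apply, starRingEnd_apply,
      star_trivial, Fin.sum_univ_three, equiv_symm_apply, Matrix.cons_val_zero,
      Matrix.cons_val_one, Matrix.head_cons, Matrix.cons_val_two, Matrix.tail_cons,
      EuclideanSpace.single_apply]
    norm_num [Fin.ext_iff]
    ring
  have hBc : Continuous (fun y => (inner ℝ (ψ y) (cross3 e1 y) : ℝ)) := by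
    rw [hBeq]
    exact ((cont_psi_comp hψ 2).mul (cont_coord 1)).sub
      ((cont_psi_comp hψ 1).mul (cont_coord 2))
  have hAc : Continuous (fun y => (inner ℝ (curl3 ψ y) ((y 0) • y) : ℝ)) := by
    have h : (fun y => (inner ℝ (curl3 ψ y) ((y 0) • y) : ℝ))
        = fun y => Dfun ψ y + (inner ℝ (ψ y) (cross3 e1 y) : ℝ) := by
      funext y; rw [Dfun]; ring
    rw [h]
    exact (cont_Dfun hψ).add hBc
  have hAB : (∫ y in ball (0:E3) R, (inner ℝ (curl3 ψ y) ((y 0) • y) : ℝ))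
      = ∫ y in ball (0:E3) R, (inner ℝ (ψ y) (cross3 e1 y) : ℝ) := by
    have hsub := integral_sub (integrableOn_ball_cont (R := R) hAc)
      (integrableOn_ball_cont (R := R) hBc)
    have h0 : (∫ y in ball (0:E3) R,
        ((inner ℝ (curl3 ψ y) ((y 0) • y) : ℝ) - (inner ℝ (ψ y) (cross3 e1 y) : ℝ))) = 0 :=
      div_int_zero hψ hR
    rw [hsub] at h0
    linarith
  have hCeq : (fun y : E3 => (inner ℝ c (cross3 e1 y) : ℝ))
      = fun y : E3 => c 2 * y 1 - c 1 * y 2 := by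
    funext y
    simp only [cross3, e1, PiLp.inner_apply, RCLike.inner_apply, starRingEnd_apply,
      star_trivial, Fin.sum_univ_three, equiv_symm_apply, Matrix.cons_val_zero,
      Matrix.cons_val_one, Matrix.head_cons, Matrix.cons_val_two, Matrix.tail_cons,
      EuclideanSpace.single_apply]
    norm_num [Fin.ext_iff]
    ring
  have hCc : Continuous (fun y : E3 => (inner ℝ c (cross3 e1 y) : ℝ)) := by
    rw [hCeq]
    exact (continuous_const.mul (cont_coord 1)).sub (continuous_const.mul (cont_coord 2))
  have hcint : (∫ y in ball (0:E3) R, (inner ℝ c (cross3 e1 y) : ℝ)) = 0 := by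
    rw [hCeq,
      integral_sub (integrableOn_ball_cont (f := fun y : E3 => c 2 * y 1) (continuous_const.mul (cont_coord 1)))
        (integrableOn_ball_cont (f := fun y : E3 => c 1 * y 2) (continuous_const.mul (cont_coord 2))),
      MeasureTheory.integral_const_mul, MeasureTheory.integral_const_mul, coord_int_zero, coord_int_zero]
    ring
  have hsplit : ∀ y : E3, (inner ℝ (ψ y - c) (cross3 e1 y) : ℝ)
      = (inner ℝ (ψ y) (cross3 e1 y) : ℝ) - (inner ℝ c (cross3 e1 y) : ℝ) :=
    fun y => inner_sub_left _ _ _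
  simp_rw [hsplit]
  rw [integral_sub (integrableOn_ball_cont hBc) (integrableOn_ball_cont hCc), hcint,
    sub_zero, hAB]
end
end

section
/- Let ψ: ℝ³ → ℝ³ be a C¹ vector field, u = curl ψ, R > 0, U > 0, and 0 ≤ ε₀ ≤ 1/6. Suppose |u(y) − U e₁| ≤ ε₀ U for all y ∈ B_R(0). Then, with ψ̄ = ⨍_{B_R(0)} ψ dy, (2π/15) U R⁵ ≤ ∫_{B_R(0)} (ψ(y) − ψ̄) · (e₁ × y) dy ≤ (2π/5) U R⁵. -/
open MeasureTheory Metric Filter Real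
open scoped ENNReal Topology

noncomputable section

namespace St14Aux

@[simp] lemma mequiv_symm_apply (v : Fin 3 → ℝ) (j : Fin 3) :
    (((MeasurableEquiv.toLp 2 (Fin 3 → ℝ)).symm).symm v : E3) j = v j := rfl

lemma normsq_eq (y : E3) : ‖y‖ ^ 2 = ∑ i, y i ^ 2 := by
  rw [EuclideanSpace.norm_eq, Real.sq_sqrt (by positivity)]
  exact Finset.sum_congr rfl fun i _ => sq_abs _

lemma insertNth_sumsq (i : Fin 3) (t : ℝ) (w : Fin 2 → ℝ) :
    ∑ j, (Fin.insertNth (α := fun _ => ℝ) i t w) j ^ 2 = t ^ 2 + ∑ j, (w j) ^ 2 := by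
  rw [Fin.sum_univ_succAbove (fun j => (Fin.insertNth (α := fun _ => ℝ) i t w j) ^ 2) i]
  simp

lemma insertNth_line (i : Fin 3) (w : Fin 2 → ℝ) (t : ℝ) :
    (((MeasurableEquiv.toLp 2 (Fin 3 → ℝ)).symm).symm (Fin.insertNth (α := fun _ => ℝ) i t w) : E3)
      = ((MeasurableEquiv.toLp 2 (Fin 3 → ℝ)).symm).symm (Fin.insertNth (α := fun _ => ℝ) i 0 w)
        + t • EuclideanSpace.single i 1 := by
  apply PiLp.ext
  intro j
  simp only [PiLp.add_apply, PiLp.smul_apply, EuclideanSpace.single_apply, smul_eq_mul,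
    mequiv_symm_apply]
  rcases eq_or_ne j i with rfl | h
  · simp [Fin.insertNth_apply_same]
  · rcases Fin.exists_succAbove_eq h with ⟨k, rfl⟩
    simp [Fin.insertNth_apply_succAbove, (Fin.succAbove_ne i k).symm, h]

lemma slice_ibp (R : ℝ) (hR : 0 < R) (i : Fin 3) (f : E3 → ℝ) (hf : ContDiff ℝ 1 f) :
    ∫ y in ball (0 : E3) R, f y * y i =
      ∫ y in ball (0 : E3) R,
        (R ^ 2 - ‖y‖ ^ 2) / 2 * fderiv ℝ f y (EuclideanSpace.single i 1) := by
  have hfc : Continuous f := hf.continuous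
  have hdfc : Continuous fun y => fderiv ℝ f y (EuclideanSpace.single i 1) :=
    (hf.continuous_fderiv one_ne_zero).clm_apply continuous_const
  set df : E3 → ℝ := fun y => fderiv ℝ f y (EuclideanSpace.single i 1) with hdf
  set g : E3 → ℝ := fun y => f y * y i - (R ^ 2 - ‖y‖ ^ 2) / 2 * df y with hg
  have hyi : Continuous fun y : E3 => y i := by
    exact (continuous_apply i).comp (PiLp.continuous_ofLp (p := 2) (β := fun _ : Fin 3 => ℝ))
  have hgc : Continuous g := by
    apply Continuous.sub (hfc.mul hyi)
    exact (((continuous_const.sub ((continuous_norm).pow 2)).div_const 2).mul hdfc)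
  have int1 : IntegrableOn (fun y => f y * y i) (ball (0 : E3) R) volume :=
    ((hfc.mul hyi).continuousOn.integrableOn_compact (isCompact_closedBall _ _)).mono_set
      ball_subset_closedBall
  have int2 : IntegrableOn (fun y => (R ^ 2 - ‖y‖ ^ 2) / 2 * df y) (ball (0 : E3) R) volume :=
    ((((continuous_const.sub ((continuous_norm).pow 2)).div_const 2).mul
      hdfc).continuousOn.integrableOn_compact (isCompact_closedBall _ _)).mono_set
      ball_subset_closedBall
  have intg : IntegrableOn g (ball (0 : E3) R) volume := int1.sub int2
  suffices h : ∫ y in ball (0 : E3) R, g y = 0 by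
    rw [hg] at h
    rw [integral_sub int1 int2] at h
    linarith
  set e := (MeasurableEquiv.toLp 2 (Fin 3 → ℝ)).symm with he
  set F : (Fin 3 → ℝ) → ℝ := fun v => Set.indicator (ball (0 : E3) R) g (e.symm v) with hF
  have hFint : Integrable F volume := by
    have : Integrable (Set.indicator (ball (0 : E3) R) g) volume :=
      (integrable_indicator_iff measurableSet_ball).2 intg
    exact (((EuclideanSpace.volume_preserving_symm_measurableEquiv_toLp
      (Fin 3)).symm e).integrable_comp_emb e.symm.measurableEmbedding).2 this
  have step1 : ∫ y in ball (0 : E3) R, g y = ∫ v, F v := by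
    rw [← integral_indicator measurableSet_ball]
    exact (((EuclideanSpace.volume_preserving_symm_measurableEquiv_toLp
      (Fin 3)).symm e).integral_comp e.symm.measurableEmbedding _).symm
  rw [step1]
  set π3 := MeasurableEquiv.piFinSuccAbove (fun _ : Fin 3 => ℝ) i with hπ
  have mp := (volume_preserving_piFinSuccAbove (fun _ : Fin 3 => ℝ) i).symm π3
  have step2 : ∫ v, F v = ∫ z : ℝ × (Fin 2 → ℝ), F (π3.symm z) :=
    (mp.integral_comp π3.symm.measurableEmbedding F).symm
  have hFint2 : Integrable (fun z : ℝ × (Fin 2 → ℝ) => F (π3.symm z)) volume :=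
    (mp.integrable_comp_emb π3.symm.measurableEmbedding).2 hFint
  have hFint2' : Integrable (fun z : ℝ × (Fin 2 → ℝ) => F (π3.symm z))
      ((volume : Measure ℝ).prod volume) := hFint2
  rw [step2, show (∫ z : ℝ × (Fin 2 → ℝ), F (π3.symm z))
    = ∫ z : ℝ × (Fin 2 → ℝ), F (π3.symm z) ∂((volume : Measure ℝ).prod volume) from rfl,
    integral_prod_symm _ hFint2']
  have key : ∀ w : Fin 2 → ℝ, ∫ t : ℝ, F (π3.symm (t, w)) = 0 := by
    intro w
    set S := ∑ j, (w j) ^ 2 with hS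
    have hS0 : 0 ≤ S := by positivity
    set yy : ℝ → E3 := fun t => e.symm (Fin.insertNth (α := fun _ => ℝ) i t w) with hyy
    have hmem : ∀ t, yy t ∈ ball (0 : E3) R ↔ t ^ 2 + S < R ^ 2 := by
      intro t
      rw [mem_ball_zero_iff]
      have h1 : ‖yy t‖ ^ 2 = t ^ 2 + S := by
        rw [normsq_eq, hS]
        exact insertNth_sumsq i t w
      have h2 : ‖yy t‖ = Real.sqrt (t ^ 2 + S) := by
        rw [← h1, Real.sqrt_sq (norm_nonneg _)]
      rw [h2, show R ^ 2 = R * R by ring, Real.sqrt_lt' hR, ← pow_two]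
    have hFeq : ∀ t, F (π3.symm (t, w)) = Set.indicator (ball (0 : E3) R) g (yy t) := fun t => rfl
    by_cases hb : R ^ 2 - S ≤ 0
    · have hzero : ∀ t : ℝ, F (π3.symm (t, w)) = 0 := by
        intro t
        rw [hFeq t, Set.indicator_of_notMem]
        rw [hmem]
        nlinarith [sq_nonneg t]
      simp only [hzero, integral_zero]
    · push_neg at hb
      set a := Real.sqrt (R ^ 2 - S) with haa
      have ha : 0 < a := Real.sqrt_pos.2 hb
      have ha2 : a ^ 2 = R ^ 2 - S := Real.sq_sqrt hb.le
      have hiff : ∀ t, t ^ 2 + S < R ^ 2 ↔ t ∈ Set.Ioo (-a) a := by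
        intro t
        constructor
        · intro h
          constructor
          · nlinarith [mul_self_nonneg (t + a)]
          · nlinarith [mul_self_nonneg (t - a)]
        · rintro ⟨h1, h2⟩
          nlinarith [mul_self_nonneg (t - a), mul_self_nonneg (t + a)]
      set φfun : ℝ → ℝ := fun t => f (yy t) * t - (a ^ 2 - t ^ 2) / 2 * df (yy t) with hφ
      have hrep : ∀ t, F (π3.symm (t, w)) = Set.indicator (Set.Ioo (-a) a) φfun t := by
        intro t
        rw [hFeq t]
        by_cases ht : t ∈ Set.Ioo (-a) a
        · rw [Set.indicator_of_mem ((hmem t).2 ((hiff t).2 ht)), Set.indicator_of_mem ht]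
          have hyit : yy t i = t := by
            show (Fin.insertNth (α := fun _ => ℝ) i t w) i = t
            simp
          have hw : (R ^ 2 - ‖yy t‖ ^ 2) / 2 = (a ^ 2 - t ^ 2) / 2 := by
            have h1 : ‖yy t‖ ^ 2 = t ^ 2 + S := by
              rw [normsq_eq, hS]; exact insertNth_sumsq i t w
            rw [h1, ha2]; ring
          simp only [hg, hφ, hyit, hw]
        · rw [Set.indicator_of_notMem, Set.indicator_of_notMem ht]
          exact fun hmem' => ht ((hiff t).1 ((hmem t).1 hmem'))
      have hyyc : Continuous yy := by
        have : yy = fun t => ((e.symm (Fin.insertNth (α := fun _ => ℝ) i 0 w) : E3)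
            + t • EuclideanSpace.single i 1) := funext fun t => insertNth_line i w t
        rw [this]
        exact continuous_const.add (continuous_id.smul continuous_const)
      have hyd : ∀ t : ℝ, HasDerivAt yy (EuclideanSpace.single i 1) t := by
        intro t
        have hyline : yy = fun t => ((e.symm (Fin.insertNth (α := fun _ => ℝ) i 0 w) : E3)
            + t • EuclideanSpace.single i 1) := funext fun t => insertNth_line i w t
        rw [hyline]
        simpa using ((hasDerivAt_id t).smul_const (EuclideanSpace.single i (1 : ℝ))).const_add
          (e.symm (Fin.insertNth (α := fun _ => ℝ) i 0 w) : E3)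
      set H : ℝ → ℝ := fun t => f (yy t) * ((a ^ 2 - t ^ 2) / 2) with hH
      have hderiv : ∀ t : ℝ,
          HasDerivAt H (df (yy t) * ((a ^ 2 - t ^ 2) / 2) + f (yy t) * (-t)) t := by
        intro t
        have h1 : HasDerivAt (fun t => f (yy t)) (df (yy t)) t :=
          ((hf.differentiable one_ne_zero) (yy t)).hasFDerivAt.comp_hasDerivAt t (hyd t)
        have h2 : HasDerivAt (fun t : ℝ => (a ^ 2 - t ^ 2) / 2) (-t) t := by
          have h2' := ((hasDerivAt_pow 2 t).const_sub (a ^ 2)).div_const 2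
          have : -((2 : ℕ) * t ^ (2 - 1)) / 2 = -t := by push_cast [pow_one]; ring
          rwa [this] at h2'
        exact h1.mul h2
      have hcont : Continuous fun t => df (yy t) * ((a ^ 2 - t ^ 2) / 2) + f (yy t) * (-t) :=
        ((hdfc.comp hyyc).mul ((continuous_const.sub (continuous_pow 2)).div_const 2)).add
          ((hfc.comp hyyc).mul continuous_neg)
      have hftc := intervalIntegral.integral_eq_sub_of_hasDerivAt
        (f := H) (a := -a) (b := a) (fun t _ => hderiv t)
        (hcont.intervalIntegrable _ _)
      have hHa : H a = 0 := by simp [hH]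
      have hHb : H (-a) = 0 := by simp [hH]
      calc ∫ t : ℝ, F (π3.symm (t, w)) = ∫ t : ℝ, Set.indicator (Set.Ioo (-a) a) φfun t := by
            simp only [hrep]
        _ = ∫ t in Set.Ioo (-a) a, φfun t := integral_indicator measurableSet_Ioo
        _ = ∫ t in (-a)..a, φfun t := by
            rw [intervalIntegral.integral_of_le (by linarith), integral_Ioc_eq_integral_Ioo]
        _ = ∫ t in (-a)..a, -(df (yy t) * ((a ^ 2 - t ^ 2) / 2) + f (yy t) * (-t)) := by
            congr 1
            funext t
            simp only [hφ]
            ring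
        _ = -(H a - H (-a)) := by rw [intervalIntegral.integral_neg, hftc]
        _ = 0 := by rw [hHa, hHb]; ring
  simp only [key, integral_zero]

lemma ball_vol : (volume (ball (0 : E3) 1)).toReal = 4 * π / 3 := by
  rw [EuclideanSpace.volume_ball, Fintype.card_fin]
  have hG : Real.Gamma ((3 : ℕ) / 2 + 1) = 3 / 4 * Real.sqrt π := by
    push_cast
    rw [show (3 : ℝ) / 2 + 1 = 3 / 2 + 1 by norm_num, Real.Gamma_add_one (by norm_num),
      show (3 : ℝ) / 2 = 1 / 2 + 1 by norm_num, Real.Gamma_add_one (by norm_num),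
      Real.Gamma_one_half_eq]
    ring
  have hsq : Real.sqrt π ^ 3 = π * Real.sqrt π := by
    rw [pow_succ, Real.sq_sqrt Real.pi_pos.le]
  have hs : (0 : ℝ) < Real.sqrt π := Real.sqrt_pos.2 Real.pi_pos
  rw [hG, ENNReal.ofReal_one, one_pow, one_mul, ENNReal.toReal_ofReal (by positivity), hsq]
  field_simp

lemma coord_le_norm (v : E3) (j : Fin 3) : |v j| ≤ ‖v‖ := by
  rw [EuclideanSpace.norm_eq]
  calc |v j| = Real.sqrt (‖v j‖ ^ 2) := by
        rw [Real.sqrt_sq (norm_nonneg _)]; exact (Real.norm_eq_abs _).symm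
    _ ≤ _ := Real.sqrt_le_sqrt (Finset.single_le_sum (f := fun i => ‖v i‖ ^ 2)
        (fun i _ => by positivity) (Finset.mem_univ j))

lemma W_integral (R : ℝ) (hR : 0 < R) :
    ∫ y in ball (0 : E3) R, (R ^ 2 - ‖y‖ ^ 2) / 2 = 4 * π / 15 * R ^ 5 := by
  classical
  set f0 : ℝ → ℝ := fun r => if r < R then (R ^ 2 - r ^ 2) / 2 else 0 with hf0
  have h1 : ∫ y in ball (0 : E3) R, (R ^ 2 - ‖y‖ ^ 2) / 2 = ∫ x : E3, f0 ‖x‖ := by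
    rw [← integral_indicator measurableSet_ball]
    congr 1
    funext x
    rw [Set.indicator_apply, mem_ball_zero_iff, hf0]
  rw [h1, integral_fun_norm_addHaar volume f0]
  have hdim : Module.finrank ℝ E3 = 3 := by simp
  rw [hdim]
  have h2 : ∫ y in Set.Ioi (0 : ℝ), y ^ (3 - 1) • f0 y
      = ∫ y in (0 : ℝ)..R, (R ^ 2 / 2) * y ^ 2 - y ^ 4 / 2 := by
    have heq : ∀ y : ℝ, y ^ (3 - 1) • f0 y
        = Set.indicator (Set.Iio R) (fun y => (R ^ 2 / 2) * y ^ 2 - y ^ 4 / 2) y := by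
      intro y
      rw [Set.indicator_apply, hf0]
      simp only [smul_eq_mul]
      by_cases h : y < R <;> simp [h, Set.mem_Iio] <;> ring
    simp_rw [heq]
    rw [setIntegral_indicator measurableSet_Iio, Set.Ioi_inter_Iio,
      intervalIntegral.integral_of_le hR.le, integral_Ioc_eq_integral_Ioo]
  rw [h2, measureReal_def, ball_vol]
  rw [intervalIntegral.integral_sub, intervalIntegral.integral_const_mul,
    intervalIntegral.integral_div, integral_pow, integral_pow]
  · norm_num
    ring
  · exact (intervalIntegral.intervalIntegrable_pow 2).const_mul _
  · exact (intervalIntegral.intervalIntegrable_pow 4).div_const 2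

lemma odd_int (R : ℝ) (j : Fin 3) : ∫ y in ball (0 : E3) R, (y j : ℝ) = 0 := by
  have h : ∫ y in ball (0 : E3) R, (y j : ℝ)
      = ∫ x : E3, Set.indicator (ball (0 : E3) R) (fun y : E3 => y j) x :=
    (integral_indicator measurableSet_ball).symm
  have hodd : ∀ x : E3, Set.indicator (ball (0 : E3) R) (fun y : E3 => y j) (-x)
      = - Set.indicator (ball (0 : E3) R) (fun y : E3 => y j) x := by
    intro x
    by_cases hx : x ∈ ball (0 : E3) R
    · have hx' : -x ∈ ball (0 : E3) R := by
        rwa [mem_ball_zero_iff, norm_neg, ← mem_ball_zero_iff]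
      rw [Set.indicator_of_mem hx, Set.indicator_of_mem hx']
      simp
    · have hx' : -x ∉ ball (0 : E3) R := by
        rw [mem_ball_zero_iff, norm_neg, ← mem_ball_zero_iff]; exact hx
      rw [Set.indicator_of_notMem hx, Set.indicator_of_notMem hx']
      simp
  have hni := integral_neg_eq_self (Set.indicator (ball (0 : E3) R) (fun y : E3 => y j)) volume
  rw [h]
  have h2 : ∫ x : E3, Set.indicator (ball (0 : E3) R) (fun y : E3 => y j) x
      = - ∫ x : E3, Set.indicator (ball (0 : E3) R) (fun y : E3 => y j) x := by
    conv_lhs => rw [← hni]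
    simp_rw [hodd]
    rw [integral_neg]
  linarith

end St14Aux


open St14Aux in
/-- Lemma 4.3, quantitative stream function integral. If `u = curl ψ`
satisfies `|u − U e₁| ≤ ε₀ U` on `B_R(0)` with `0 ≤ ε₀ ≤ 1/6`, then
`(2π/15) U R⁵ ≤ ∫_{B_R} (ψ − ψ̄) · (e₁ × y) dy ≤ (2π/5) U R⁵`. -/
theorem statement14 (ψ : E3 → E3) (hψ : ContDiff ℝ 1 ψ) (R U ε₀ : ℝ)
    (hR : 0 < R) (hU : 0 < U) (hε0 : 0 ≤ ε₀) (hε1 : ε₀ ≤ 1 / 6)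
    (hosc : ∀ y ∈ ball (0 : E3) R, ‖curl3 ψ y - U • e1‖ ≤ ε₀ * U) :
    2 * π / 15 * (U * R ^ 5) ≤
      (∫ y in ball (0 : E3) R,
        (inner ℝ (ψ y - ⨍ z in ball (0 : E3) R, ψ z) (cross3 e1 y) : ℝ)) ∧
    (∫ y in ball (0 : E3) R,
        (inner ℝ (ψ y - ⨍ z in ball (0 : E3) R, ψ z) (cross3 e1 y) : ℝ)) ≤
      2 * π / 5 * (U * R ^ 5) := by
  have hπp := Real.pi_pos
  set B := ball (0 : E3) R with hB
  set c : E3 := ⨍ z in B, ψ z with hc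
  have hψc : Continuous ψ := hψ.continuous
  have hcoord : ∀ k : Fin 3, Continuous fun y : E3 => y k := fun k =>
    (continuous_apply k).comp (PiLp.continuous_ofLp (p := 2) (β := fun _ : Fin 3 => ℝ))
  have hψk : ∀ k : Fin 3, Continuous fun y => ψ y k := fun k => (hcoord k).comp hψc
  have hD : ∀ i k : Fin 3, Continuous fun y => fderiv ℝ ψ y (EuclideanSpace.single i 1) k :=
    fun i k => (hcoord k).comp ((hψ.continuous_fderiv one_ne_zero).clm_apply continuous_const)
  have hIOn : ∀ {h : E3 → ℝ}, Continuous h → IntegrableOn h B volume := fun hh =>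
    (hh.continuousOn.integrableOn_compact (isCompact_closedBall _ _)).mono_set
      ball_subset_closedBall
  have hWcont : Continuous fun y : E3 => (R ^ 2 - ‖y‖ ^ 2) / 2 :=
    (continuous_const.sub (continuous_norm.pow 2)).div_const 2
  have hcurlcont : Continuous fun y : E3 => curl3 ψ y 0 := by
    show Continuous fun y : E3 => fderiv ℝ ψ y (EuclideanSpace.single 1 1) 2
      - fderiv ℝ ψ y (EuclideanSpace.single 2 1) 1
    exact (hD 1 2).sub (hD 2 1)
  have hinner_sum : ∀ a b : E3, (inner ℝ a b : ℝ) = ∑ i, a i * b i := fun a b => by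
    rw [PiLp.inner_apply]; simp only [Real.inner_apply]
  have hcr0 : ∀ y : E3, cross3 e1 y 0 = 0 := fun y => by
    show _ = _; simp [cross3, e1, EuclideanSpace.single_apply]
  have hcr1 : ∀ y : E3, cross3 e1 y 1 = -(y 2) := fun y => by
    show _ = _; simp [cross3, e1, EuclideanSpace.single_apply]
  have hcr2 : ∀ y : E3, cross3 e1 y 2 = y 1 := fun y => by
    show _ = _; simp [cross3, e1, EuclideanSpace.single_apply]
  have hinner : ∀ y : E3, (inner ℝ (ψ y - c) (cross3 e1 y) : ℝ)
      = ψ y 2 * y 1 - ψ y 1 * y 2 - c 2 * y 1 + c 1 * y 2 := by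
    intro y
    rw [hinner_sum, Fin.sum_univ_three, hcr0, hcr1, hcr2, PiLp.sub_apply, PiLp.sub_apply,
      PiLp.sub_apply]
    ring
  -- ContDiff of components and fderiv of components
  have hψcd : ∀ k : Fin 3, ContDiff ℝ 1 (fun y => ψ y k) := fun k =>
    contDiff_euclidean.1 hψ k
  have hfd : ∀ (k i : Fin 3) (y : E3),
      fderiv ℝ (fun z => ψ z k) y (EuclideanSpace.single i 1)
        = fderiv ℝ ψ y (EuclideanSpace.single i 1) k := by
    intro k i y
    have h : HasFDerivAt (fun z => ψ z k)
        ((EuclideanSpace.proj k).comp (fderiv ℝ ψ y)) y := by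
      exact (EuclideanSpace.proj k).hasFDerivAt.comp y (hψ.differentiable one_ne_zero y).hasFDerivAt
    rw [h.fderiv]
    rfl
  -- the integration by parts identity
  have int1 : IntegrableOn (fun y : E3 => ψ y 2 * y 1) B volume :=
    hIOn ((hψk 2).mul (hcoord 1))
  have int2 : IntegrableOn (fun y : E3 => ψ y 1 * y 2) B volume :=
    hIOn ((hψk 1).mul (hcoord 2))
  have int3 : IntegrableOn (fun y : E3 => c 2 * y 1) B volume :=
    hIOn (continuous_const.mul (hcoord 1))
  have int4 : IntegrableOn (fun y : E3 => c 1 * y 2) B volume :=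
    hIOn (continuous_const.mul (hcoord 2))
  have intW1 : IntegrableOn
      (fun y : E3 => (R ^ 2 - ‖y‖ ^ 2) / 2 * fderiv ℝ ψ y (EuclideanSpace.single 1 1) 2)
      B volume := hIOn (hWcont.mul (hD 1 2))
  have intW2 : IntegrableOn
      (fun y : E3 => (R ^ 2 - ‖y‖ ^ 2) / 2 * fderiv ℝ ψ y (EuclideanSpace.single 2 1) 1)
      B volume := hIOn (hWcont.mul (hD 2 1))
  have hIeq : ∫ y in B, (inner ℝ (ψ y - c) (cross3 e1 y) : ℝ)
      = ∫ y in B, (R ^ 2 - ‖y‖ ^ 2) / 2 * curl3 ψ y 0 := by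
    calc ∫ y in B, (inner ℝ (ψ y - c) (cross3 e1 y) : ℝ)
        = ∫ y in B, (ψ y 2 * y 1 - ψ y 1 * y 2 - c 2 * y 1 + c 1 * y 2) := by
          simp_rw [hinner]
      _ = ((∫ y in B, ψ y 2 * y 1) - ∫ y in B, ψ y 1 * y 2)
          - (∫ y in B, c 2 * y 1) + ∫ y in B, c 1 * y 2 := by
          have int12 : IntegrableOn (fun y : E3 => ψ y 2 * y 1 - ψ y 1 * y 2) B volume :=
            int1.sub int2
          have int123 : IntegrableOn
              (fun y : E3 => ψ y 2 * y 1 - ψ y 1 * y 2 - c 2 * y 1) B volume := int12.sub int3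
          rw [← integral_sub int1 int2, ← integral_sub int12 int3, ← integral_add int123 int4]
      _ = (∫ y in B, ψ y 2 * y 1) - ∫ y in B, ψ y 1 * y 2 := by
          rw [integral_const_mul, integral_const_mul, odd_int R 1, odd_int R 2]
          ring
      _ = (∫ y in B, (R ^ 2 - ‖y‖ ^ 2) / 2 * fderiv ℝ ψ y (EuclideanSpace.single 1 1) 2)
          - ∫ y in B, (R ^ 2 - ‖y‖ ^ 2) / 2 * fderiv ℝ ψ y (EuclideanSpace.single 2 1) 1 := by
          rw [slice_ibp R hR 1 (fun z => ψ z 2) (hψcd 2),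
            slice_ibp R hR 2 (fun z => ψ z 1) (hψcd 1)]
          simp_rw [hfd]
          rfl
      _ = ∫ y in B, (R ^ 2 - ‖y‖ ^ 2) / 2 * curl3 ψ y 0 := by
          rw [← integral_sub intW1 intW2]
          congr 1
          funext y
          show _ = (R ^ 2 - ‖y‖ ^ 2) / 2 * (fderiv ℝ ψ y (EuclideanSpace.single 1 1) 2
            - fderiv ℝ ψ y (EuclideanSpace.single 2 1) 1)
          ring
  -- bounds
  have hbound : ∀ y ∈ B, |curl3 ψ y 0 - U| ≤ ε₀ * U := by
    intro y hy
    have h1 : (curl3 ψ y - U • e1) 0 = curl3 ψ y 0 - U := by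
      simp [PiLp.sub_apply, PiLp.smul_apply, e1, EuclideanSpace.single_apply]
    calc |curl3 ψ y 0 - U| = |(curl3 ψ y - U • e1) 0| := by rw [h1]
      _ ≤ ‖curl3 ψ y - U • e1‖ := coord_le_norm _ _
      _ ≤ ε₀ * U := hosc y hy
  have hWnn : ∀ y ∈ B, 0 ≤ (R ^ 2 - ‖y‖ ^ 2) / 2 := by
    intro y hy
    have h1 : ‖y‖ < R := mem_ball_zero_iff.1 hy
    nlinarith [norm_nonneg y]
  have hR5 : (0 : ℝ) < R ^ 5 := pow_pos hR 5
  have hlow : (1 - ε₀) * U * (4 * π / 15 * R ^ 5)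
      ≤ ∫ y in B, (R ^ 2 - ‖y‖ ^ 2) / 2 * curl3 ψ y 0 := by
    calc (1 - ε₀) * U * (4 * π / 15 * R ^ 5)
        = ∫ y in B, (1 - ε₀) * U * ((R ^ 2 - ‖y‖ ^ 2) / 2) := by
          rw [integral_const_mul, W_integral R hR]
      _ ≤ ∫ y in B, (R ^ 2 - ‖y‖ ^ 2) / 2 * curl3 ψ y 0 := by
          apply setIntegral_mono_on (hIOn (continuous_const.mul hWcont))
            (hIOn (hWcont.mul hcurlcont)) measurableSet_ball
          intro y hy
          simp only [Pi.mul_apply]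
          have h1 := (abs_le.1 (hbound y hy)).1
          nlinarith [mul_nonneg (hWnn y hy)
            (by linarith : (0 : ℝ) ≤ curl3 ψ y 0 - (1 - ε₀) * U)]
  have hhigh : (∫ y in B, (R ^ 2 - ‖y‖ ^ 2) / 2 * curl3 ψ y 0)
      ≤ (1 + ε₀) * U * (4 * π / 15 * R ^ 5) := by
    calc (∫ y in B, (R ^ 2 - ‖y‖ ^ 2) / 2 * curl3 ψ y 0)
        ≤ ∫ y in B, (1 + ε₀) * U * ((R ^ 2 - ‖y‖ ^ 2) / 2) := by
          apply setIntegral_mono_on (hIOn (hWcont.mul hcurlcont))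
            (hIOn (continuous_const.mul hWcont)) measurableSet_ball
          intro y hy
          simp only [Pi.mul_apply]
          have h1 := (abs_le.1 (hbound y hy)).2
          nlinarith [mul_nonneg (hWnn y hy)
            (by linarith : (0 : ℝ) ≤ (1 + ε₀) * U - curl3 ψ y 0)]
      _ = (1 + ε₀) * U * (4 * π / 15 * R ^ 5) := by
          rw [integral_const_mul, W_integral R hR]
  constructor
  · rw [hIeq]
    nlinarith [mul_pos (mul_pos hπp hU) hR5]
  · rw [hIeq]
    nlinarith [mul_pos (mul_pos hπp hU) hR5]
end
end

section
/- Let ν > 0, U ≥ 0, λ = U/(2ν), and define Γ: ℝ³ \ {0} → ℝ by Γ(x) = (1/(4πν|x|)) e^{−λ(|x| − x₁)}, where x = (x₁,x₂,x₃) and r = |x|. Then Γ is smooth on ℝ³ \ {0}, satisfies 0 < Γ(x) ≤ 1/(4πν|x|) for all x ≠ 0, and satisfies the drift–Laplace equation U ∂_{x₁}Γ(x) = ν ΔΓ(x) for every x ≠ 0. -/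
open MeasureTheory Metric Filter Real
open scoped ENNReal Topology

noncomputable section

lemma norm_hasFDerivAt' {x : E3} (hx : x ≠ 0) :
    HasFDerivAt (fun y : E3 => ‖y‖) (‖x‖⁻¹ • innerSL ℝ x) x := by
  have hn : ‖x‖ ≠ 0 := norm_ne_zero_iff.mpr hx
  have h1 : HasFDerivAt (fun y : E3 => ‖y‖ ^ 2) (2 • innerSL ℝ x) x :=
    (hasStrictFDerivAt_norm_sq x).hasFDerivAt
  have h0 : (‖x‖ : ℝ) ^ 2 ≠ 0 := pow_ne_zero 2 hn
  have hs := (Real.hasDerivAt_sqrt h0).comp_hasFDerivAt x h1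
  have heq : (fun y : E3 => Real.sqrt (‖y‖ ^ 2)) = fun y : E3 => ‖y‖ := by
    funext y; exact Real.sqrt_sq (norm_nonneg y)
  rw [show ((fun x => √x) ∘ fun y : E3 => ‖y‖ ^ 2) = fun y : E3 => ‖y‖ from heq] at hs
  refine hs.congr_fderiv ?_
  rw [Real.sqrt_sq (norm_nonneg x)]
  ext v
  simp only [ContinuousLinearMap.smul_apply, ContinuousLinearMap.coe_smul', Pi.smul_apply,
    smul_eq_mul]
  field_simp
  ring

def gam (c l : ℝ) (x : E3) : ℝ := c * ‖x‖⁻¹ * Real.exp (-l * (‖x‖ - x 0))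

lemma gam_hasFDerivAt (c l : ℝ) {x : E3} (hx : x ≠ 0) :
    HasFDerivAt (gam c l)
      ((gam c l x * (-(‖x‖ ^ 2)⁻¹ - l * ‖x‖⁻¹)) • innerSL ℝ x
        + ((gam c l x * l) • (EuclideanSpace.proj 0 : E3 →L[ℝ] ℝ))) x := by
  have hn : ‖x‖ ≠ 0 := norm_ne_zero_iff.mpr hx
  have hr := norm_hasFDerivAt' hx
  have hinv : HasFDerivAt (fun y : E3 => ‖y‖⁻¹)
      ((-(‖x‖ ^ 2)⁻¹) • (‖x‖⁻¹ • innerSL ℝ x)) x :=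
    (hasDerivAt_inv hn).comp_hasFDerivAt x hr
  have hproj : HasFDerivAt (fun y : E3 => y 0) (EuclideanSpace.proj 0 : E3 →L[ℝ] ℝ) x :=
    (EuclideanSpace.proj 0 : E3 →L[ℝ] ℝ).hasFDerivAt
  have harg : HasFDerivAt (fun y : E3 => -l * (‖y‖ - y 0))
      ((-l) • (‖x‖⁻¹ • innerSL ℝ x - (EuclideanSpace.proj 0 : E3 →L[ℝ] ℝ))) x :=
    (hr.sub hproj).const_mul (-l)
  have hexp := harg.exp
  have hmul := (hinv.const_mul c).mul hexp
  refine hmul.congr_fderiv ?_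
  ext v
  simp only [gam, ContinuousLinearMap.add_apply, ContinuousLinearMap.smul_apply,
    ContinuousLinearMap.coe_smul', Pi.smul_apply, ContinuousLinearMap.coe_sub', Pi.sub_apply,
    smul_eq_mul]
  ring

lemma fderiv_gam_single (c l : ℝ) {x : E3} (hx : x ≠ 0) (i : Fin 3) :
    fderiv ℝ (gam c l) x (EuclideanSpace.single i 1) =
      gam c l x * ((-(‖x‖ ^ 2)⁻¹ - l * ‖x‖⁻¹) * x i
        + l * (if (0 : Fin 3) = i then (1 : ℝ) else 0)) := by
  rw [(gam_hasFDerivAt c l hx).fderiv]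
  simp only [ContinuousLinearMap.add_apply, ContinuousLinearMap.smul_apply, smul_eq_mul,
    innerSL_apply_apply, EuclideanSpace.inner_single_right, PiLp.proj_apply,
    EuclideanSpace.single_apply, map_one, one_mul, starRingEnd_apply, star_trivial]
  ring

lemma second_deriv (c l : ℝ) {x : E3} (hx : x ≠ 0) (i : Fin 3) :
    fderiv ℝ (fun y => fderiv ℝ (gam c l) y (EuclideanSpace.single i 1)) x
      (EuclideanSpace.single i 1)
    = gam c l x * (((-(‖x‖ ^ 2)⁻¹ - l * ‖x‖⁻¹) * x i
          + l * (if (0 : Fin 3) = i then (1:ℝ) else 0)) ^ 2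
        + (2 * ((‖x‖ ^ 2) ^ 2)⁻¹ + l * (‖x‖ ^ 2)⁻¹ * ‖x‖⁻¹) * x i ^ 2
        + (-(‖x‖ ^ 2)⁻¹ - l * ‖x‖⁻¹)) := by
  have hn : ‖x‖ ≠ 0 := norm_ne_zero_iff.mpr hx
  have hn2 : (‖x‖ : ℝ) ^ 2 ≠ 0 := pow_ne_zero 2 hn
  have hev : (fun y => fderiv ℝ (gam c l) y (EuclideanSpace.single i 1)) =ᶠ[nhds x]
      (fun y => gam c l y * ((-(‖y‖ ^ 2)⁻¹ - l * ‖y‖⁻¹) * y i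
        + l * (if (0 : Fin 3) = i then (1 : ℝ) else 0))) := by
    filter_upwards [IsOpen.mem_nhds isOpen_compl_singleton hx] with y hy
    exact fderiv_gam_single c l hy i
  rw [hev.fderiv_eq]
  have hsq : HasFDerivAt (fun y : E3 => ‖y‖ ^ 2) ((2 : ℝ) • innerSL ℝ x) x := by
    have h := (hasStrictFDerivAt_norm_sq x).hasFDerivAt
    rwa [show ((2 : ℕ) • innerSL ℝ x : E3 →L[ℝ] ℝ) = (2 : ℝ) • innerSL ℝ x by
      ext v; simp [two_smul]] at h
  have hinv2 : HasFDerivAt (fun y : E3 => (‖y‖ ^ 2)⁻¹)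
      ((-((‖x‖ ^ 2) ^ 2)⁻¹) • ((2 : ℝ) • innerSL ℝ x)) x :=
    (hasDerivAt_inv hn2).comp_hasFDerivAt x hsq
  have hinv1 : HasFDerivAt (fun y : E3 => ‖y‖⁻¹)
      ((-(‖x‖ ^ 2)⁻¹) • (‖x‖⁻¹ • innerSL ℝ x)) x :=
    (hasDerivAt_inv hn).comp_hasFDerivAt x (norm_hasFDerivAt' hx)
  have Hb := (hinv2.neg).sub (hinv1.const_mul l)
  have hyi : HasFDerivAt (fun y : E3 => y i) (EuclideanSpace.proj i : E3 →L[ℝ] ℝ) x :=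
    (EuclideanSpace.proj i : E3 →L[ℝ] ℝ).hasFDerivAt
  have Hh := (Hb.mul hyi).add_const (l * (if (0 : Fin 3) = i then (1 : ℝ) else 0))
  have Hp := (gam_hasFDerivAt c l hx).mul Hh
  erw [Hp.fderiv]
  simp only [ContinuousLinearMap.add_apply, ContinuousLinearMap.smul_apply,
    ContinuousLinearMap.coe_smul', ContinuousLinearMap.coe_sub', ContinuousLinearMap.coe_neg',
    Pi.smul_apply, Pi.sub_apply, Pi.neg_apply, smul_eq_mul,
    innerSL_apply_apply, EuclideanSpace.inner_single_right, PiLp.proj_apply,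
    EuclideanSpace.single_apply, map_one, one_mul, starRingEnd_apply, star_trivial,
    if_pos rfl, if_true, nsmul_eq_mul, Pi.mul_apply, Pi.ofNat_apply]
  ring


lemma keyalg (G l r x0 x1 x2 U ν : ℝ) (hr : r ≠ 0) (hs : x0^2+x1^2+x2^2 = r^2)
    (hU : U = 2*ν*l) :
    U * (G * ((-(r ^ 2)⁻¹ - l * r⁻¹) * x0 + l * 1)) =
      ν * ((G * (((-(r ^ 2)⁻¹ - l * r⁻¹) * x0 + l * 1) ^ 2
            + (2 * ((r ^ 2) ^ 2)⁻¹ + l * (r ^ 2)⁻¹ * r⁻¹) * x0 ^ 2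
            + (-(r ^ 2)⁻¹ - l * r⁻¹)))
        + (G * (((-(r ^ 2)⁻¹ - l * r⁻¹) * x1 + l * 0) ^ 2
            + (2 * ((r ^ 2) ^ 2)⁻¹ + l * (r ^ 2)⁻¹ * r⁻¹) * x1 ^ 2
            + (-(r ^ 2)⁻¹ - l * r⁻¹)))
        + (G * (((-(r ^ 2)⁻¹ - l * r⁻¹) * x2 + l * 0) ^ 2
            + (2 * ((r ^ 2) ^ 2)⁻¹ + l * (r ^ 2)⁻¹ * r⁻¹) * x2 ^ 2
            + (-(r ^ 2)⁻¹ - l * r⁻¹)))) := by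
  subst hU
  field_simp
  linear_combination (-(ν * G) * (3*l*r + l^2*r^2 + 3)) * hs

lemma gamma_eq (ν U : ℝ) : Gamma ν U = gam ((4 * π * ν)⁻¹) (U / (2 * ν)) := by
  funext x
  unfold _root_.Gamma gam
  rw [mul_inv]

lemma gam_contDiffOn (c l : ℝ) : ContDiffOn ℝ (⊤ : ℕ∞) (gam c l) {(0 : E3)}ᶜ := by
  intro x hx
  have hx0 : x ≠ 0 := hx
  have hn : ‖x‖ ≠ 0 := norm_ne_zero_iff.mpr hx0
  have h1 : ContDiffAt ℝ (⊤ : ℕ∞) (fun y : E3 => ‖y‖) x := contDiffAt_norm ℝ hx0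
  have h3 : ContDiffAt ℝ (⊤ : ℕ∞) (fun y : E3 => y 0) x :=
    (EuclideanSpace.proj (𝕜 := ℝ) (0 : Fin 3)).contDiff.contDiffAt
  exact ((contDiffAt_const.mul (h1.inv hn)).mul
    ((contDiffAt_const.mul (h1.sub h3)).exp)).contDiffWithinAt

lemma coord_le_norm (x : E3) (i : Fin 3) : x i ≤ ‖x‖ := by
  have h1 : x i ≤ |x i| := le_abs_self _
  have h2 : |x i| ≤ ‖x‖ := by
    rw [EuclideanSpace.norm_eq, ← Real.sqrt_sq_eq_abs]
    apply Real.sqrt_le_sqrt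
    have : |x i| ^ 2 ≤ ∑ j : Fin 3, ‖x j‖ ^ 2 := by
      refine Finset.single_le_sum (fun j _ => by positivity) (Finset.mem_univ i) |>.trans_eq' ?_
      simp [sq_abs]
    simpa [sq_abs] using this
  linarith

lemma sum_sq_eq (x : E3) : x 0 ^ 2 + x 1 ^ 2 + x 2 ^ 2 = ‖x‖ ^ 2 := by
  rw [EuclideanSpace.norm_eq, Real.sq_sqrt (by positivity)]
  rw [Fin.sum_univ_three]
  simp [sq_abs]


/-- Lemma A.1, part 1. With `λ = U/(2ν)`, the function
`Γ(x) = (1/(4πν|x|)) e^{−λ(|x|−x₁)}` is smooth away from the origin, satisfies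
`0 < Γ(x) ≤ 1/(4πν|x|)` for `x ≠ 0`, and solves `U ∂₁Γ = ν ΔΓ` away from the origin. -/
theorem statement15 (ν U : ℝ) (hν : 0 < ν) (hU : 0 ≤ U) :
    ContDiffOn ℝ (⊤ : ℕ∞) (Gamma ν U) {(0 : E3)}ᶜ ∧
    (∀ x : E3, x ≠ 0 → 0 < Gamma ν U x ∧ Gamma ν U x ≤ (4 * π * ν * ‖x‖)⁻¹) ∧
    (∀ x : E3, x ≠ 0 → U * fderiv ℝ (Gamma ν U) x e1 = ν * lapS (Gamma ν U) x) := by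
  have hπ : (0 : ℝ) < π := Real.pi_pos
  refine ⟨?_, ?_, ?_⟩
  · rw [gamma_eq]
    exact gam_contDiffOn _ _
  · intro x hx
    have hnorm : (0 : ℝ) < ‖x‖ := norm_pos_iff.mpr hx
    constructor
    · unfold _root_.Gamma
      positivity
    · unfold _root_.Gamma
      nth_rewrite 2 [← mul_one (4 * π * ν * ‖x‖)⁻¹]
      refine mul_le_mul_of_nonneg_left ?_ (by positivity)
      rw [Real.exp_le_one_iff]
      have h0 : x 0 ≤ ‖x‖ := coord_le_norm x 0
      have h1 : 0 ≤ U / (2 * ν) := by positivity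
      nlinarith
  · intro x hx
    have hn : ‖x‖ ≠ 0 := norm_ne_zero_iff.mpr hx
    rw [gamma_eq]
    set c := (4 * π * ν)⁻¹ with hc
    set l := U / (2 * ν) with hl
    have hUl : U = 2 * ν * l := by
      rw [hl]; field_simp
    rw [show e1 = EuclideanSpace.single (0 : Fin 3) 1 from rfl]
    rw [fderiv_gam_single c l hx 0]
    unfold lapS
    rw [Fin.sum_univ_three, second_deriv c l hx 0, second_deriv c l hx 1, second_deriv c l hx 2]
    simp only [show ((0 : Fin 3) = 0) = True from by simp,
      show ((0 : Fin 3) = 1) = False from by decide,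
      show ((0 : Fin 3) = 2) = False from by decide, if_true, if_false]
    exact keyalg (gam c l x) l ‖x‖ (x 0) (x 1) (x 2) U ν hn (sum_sq_eq x) hUl
end
end

section
/- There is an absolute constant C > 0 such that for every ν > 0, U ≥ 0, λ = U/(2ν), and every x = (x₁,x₂,x₃) ∈ ℝ³ with r = |x| > 0 and r − x₁ > 0, the gradient of Γ(x) = (1/(4πν r)) e^{−λ(r − x₁)} satisfies |∇Γ(x)| ≤ (C/ν) r^{−3/2} (r − x₁)^{−1/2}. In particular the bound is uniform in λ ≥ 0. -/
open MeasureTheory Metric Filter Real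
open scoped ENNReal Topology

noncomputable section

open scoped RealInnerProductSpace

lemma hasFDerivAt_norm_ne {x : E3} (hx : x ≠ 0) :
    HasFDerivAt (fun y : E3 => ‖y‖) (‖x‖⁻¹ • (innerSL ℝ x)) x := by
  have hsq : HasFDerivAt (fun y : E3 => ⟪y, y⟫) ((2:ℝ) • (innerSL ℝ x)) x := by
    have h := (hasFDerivAt_id x).inner ℝ (hasFDerivAt_id x)
    refine h.congr_fderiv (Eq.symm ?_)
    ext h'
    simp [fderivInnerCLM, real_inner_comm]
    have : ∑ i, h' i * x i = ∑ i, x i * h' i := by simp [mul_comm]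
    ring
  have hne : ⟪x, x⟫ ≠ 0 := inner_self_ne_zero.mpr hx
  have h2 := hsq.sqrt hne
  have heq : (fun y : E3 => Real.sqrt ⟪y, y⟫) = fun y : E3 => ‖y‖ := by
    funext y; rw [norm_eq_sqrt_real_inner]
  rw [heq] at h2
  refine h2.congr_fderiv (Eq.symm ?_)
  rw [real_inner_self_eq_norm_sq, Real.sqrt_sq (norm_nonneg x), smul_smul]
  congr 1
  have : ‖x‖ ≠ 0 := by simpa using hx
  field_simp

lemma gamma_hasGradientAt (ν U : ℝ) (x : E3) (hν : 0 < ν) (hx : x ≠ 0) :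
    HasGradientAt (Gamma ν U)
      ((-(Gamma ν U x * (‖x‖⁻¹ * ‖x‖⁻¹))) • x
        + ((U / (2 * ν)) * Gamma ν U x) • (e1 - ‖x‖⁻¹ • x)) x := by
  set r := ‖x‖ with hrdef
  have hrpos : 0 < r := norm_pos_iff.mpr hx
  set lam := U / (2 * ν) with hlam
  have hN := hasFDerivAt_norm_ne hx
  have hP : HasFDerivAt (fun y : E3 => y 0)
      (EuclideanSpace.proj (0 : Fin 3) : E3 →L[ℝ] ℝ) x := by
    have := (EuclideanSpace.proj (0 : Fin 3) : E3 →L[ℝ] ℝ).hasFDerivAt (x := x)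
    convert this using 2 with y
    rfl
  have hIn : HasFDerivAt (fun y : E3 => -lam * (‖y‖ - y 0))
      ((-lam) • ((r⁻¹ • innerSL ℝ x) - (EuclideanSpace.proj (0 : Fin 3) : E3 →L[ℝ] ℝ))) x :=
    (hN.sub hP).const_mul (-lam)
  have hExp := hIn.exp
  have hden : HasFDerivAt (fun y : E3 => 4 * π * ν * ‖y‖)
      ((4 * π * ν) • (r⁻¹ • innerSL ℝ x)) x := hN.const_mul _
  have hdenne : 4 * π * ν * r ≠ 0 := by positivity
  have hInv := (hasDerivAt_inv hdenne).comp_hasFDerivAt x hden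
  have Total := hInv.mul hExp
  rw [hasGradientAt_iff_hasFDerivAt]
  refine Total.congr_fderiv (Eq.symm ?_)
  apply ContinuousLinearMap.ext
  intro h
  rw [InnerProductSpace.toDual_apply_apply]
  have hE1 : ⟪e1, h⟫ = h 0 := by
    simp [e1, EuclideanSpace.inner_single_left]
  simp only [ContinuousLinearMap.add_apply, ContinuousLinearMap.smul_apply,
    ContinuousLinearMap.sub_apply, innerSL_apply_apply, inner_add_left,
    real_inner_smul_left, inner_sub_left, inner_neg_left, smul_eq_mul, Function.comp,
    PiLp.proj_apply, hE1, _root_.Gamma]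
  set I := ⟪x, h⟫
  set p := h 0
  simp only [← hrdef, ← hlam]
  have h4 : (4 * π * ν * r) ≠ 0 := hdenne
  field_simp
  ring

set_option maxHeartbeats 2000000

/-- gradient bound for the fundamental solution, uniform in the drift.
There is an absolute constant `C > 0` such that for all `ν > 0`, `U ≥ 0` and all `x` with
`r = |x| > 0` and `r − x₁ > 0`, `|∇Γ(x)| ≤ (C/ν) r^{−3/2} (r − x₁)^{−1/2}`. -/
theorem statement17 : ∃ C : ℝ, 0 < C ∧
    ∀ (ν U : ℝ) (x : E3), 0 < ν → 0 ≤ U → 0 < ‖x‖ → 0 < ‖x‖ - x 0 →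
      ‖gradient (Gamma ν U) x‖ ≤
        C / ν * ‖x‖ ^ (-(3 / 2) : ℝ) * (‖x‖ - x 0) ^ (-(1 / 2) : ℝ) := by
  refine ⟨1, one_pos, ?_⟩
  intro ν U x hν hU hr hs
  have hx : x ≠ 0 := norm_pos_iff.mp hr
  set r := ‖x‖ with hrdef
  set s : ℝ := r - x 0 with hsdef
  set lam := U / (2 * ν) with hlam
  have hlam0 : 0 ≤ lam := by positivity
  set G := Gamma ν U x with hGdef
  have hGa : G = (4 * π * ν * r)⁻¹ * Real.exp (-lam * s) := by
    rw [hGdef, _root_.Gamma, ← hrdef, ← hlam, hsdef]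
  have hGpos : 0 < G := by
    rw [hGa]; positivity
  have hgrad := gamma_hasGradientAt ν U x hν hx
  rw [hgrad.gradient]
  -- abbreviations
  set a := Real.sqrt r with hadef
  set b := Real.sqrt s with hbdef
  have hapos : 0 < a := Real.sqrt_pos.mpr hr
  have hbpos : 0 < b := Real.sqrt_pos.mpr hs
  have ha2 : a ^ 2 = r := Real.sq_sqrt hr.le
  have hb2 : b ^ 2 = s := Real.sq_sqrt hs.le
  have hc2 : (Real.sqrt 2) ^ 2 = 2 := Real.sq_sqrt (by norm_num)
  have hcpos : 0 < Real.sqrt 2 := Real.sqrt_pos.mpr (by norm_num)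
  -- s ≤ 2 r, hence b ≤ √2 a
  have hx0 : |x 0| ≤ r := by
    have h1 : ⟪e1, x⟫ = x 0 := by simp [e1, EuclideanSpace.inner_single_left]
    have h2 := abs_real_inner_le_norm e1 x
    rw [h1] at h2
    have he : ‖e1‖ = 1 := by
      simp [e1, EuclideanSpace.norm_single]
    rw [he, one_mul] at h2
    exact h2
  have hs2r : s ≤ 2 * r := by
    have := neg_abs_le (x 0)
    rw [hsdef]; linarith [(abs_le.mp hx0).1]
  have hba : b ≤ Real.sqrt 2 * a := by
    rw [hbdef, hadef, ← Real.sqrt_mul (by norm_num : (0:ℝ) ≤ 2)]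
    exact Real.sqrt_le_sqrt hs2r
  -- norm of e1 - r⁻¹ • x
  set w := ‖e1 - r⁻¹ • x‖ with hwdef
  have hw2 : w ^ 2 = 2 * s / r := by
    rw [hwdef, norm_sub_sq_real]
    have h1 : ⟪e1, r⁻¹ • x⟫ = r⁻¹ * x 0 := by
      rw [real_inner_smul_right]
      simp [e1, EuclideanSpace.inner_single_left]
    have he : ‖e1‖ = 1 := by simp [e1, EuclideanSpace.norm_single]
    have hnx : ‖r⁻¹ • x‖ = 1 := by
      rw [norm_smul, Real.norm_eq_abs, abs_of_pos (by positivity : (0:ℝ) < r⁻¹)]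
      rw [← hrdef]; field_simp
    rw [h1, he, hnx]
    have : (0:ℝ) < r := hr
    field_simp [hsdef]
    ring
  have hwle : w ≤ Real.sqrt 2 * b / a := by
    have hwnn : 0 ≤ w := norm_nonneg _
    have hrhs : 0 ≤ Real.sqrt 2 * b / a := by positivity
    have hsq : w ^ 2 ≤ (Real.sqrt 2 * b / a) ^ 2 := by
      rw [hw2, div_pow, mul_pow, hc2, hb2, ha2]
    nlinarith
  -- exp bounds
  have hexple : Real.exp (-lam * s) ≤ 1 := by
    rw [Real.exp_le_one_iff]
    nlinarith
  have hlamexp : lam * Real.exp (-lam * s) ≤ s⁻¹ := by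
    have h1 : lam * s ≤ Real.exp (lam * s) := by
      have := Real.add_one_le_exp (lam * s)
      linarith
    have h2 : Real.exp (-lam * s) = (Real.exp (lam * s))⁻¹ := by
      rw [← Real.exp_neg]; ring_nf
    have hexpp : 0 < Real.exp (lam * s) := Real.exp_pos _
    have hmul : Real.exp (-lam * s) * Real.exp (lam * s) = 1 := by
      rw [← Real.exp_add]; ring_nf; exact Real.exp_zero
    have hinvs : lam * Real.exp (-lam * s) * s ≤ 1 := by
      have h3 : 0 < Real.exp (-lam * s) := Real.exp_pos _
      nlinarith
    rw [← mul_le_mul_iff_of_pos_right hs]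
    have : s⁻¹ * s = 1 := by field_simp
    rw [this]
    exact hinvs
  -- rewrite the gradient
  rw [← hGdef]
  set v := (-(G * (r⁻¹ * r⁻¹))) • x + (lam * G) • (e1 - r⁻¹ • x) with hvdef
  have htri : ‖v‖ ≤ G * r⁻¹ + lam * G * w := by
    refine le_trans (norm_add_le _ _) ?_
    rw [norm_smul, norm_smul, Real.norm_eq_abs, Real.norm_eq_abs, ← hwdef, ← hrdef]
    have e1n : |(-(G * (r⁻¹ * r⁻¹)))| = G * (r⁻¹ * r⁻¹) := by
      rw [abs_neg, abs_of_pos (by positivity)]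
    have e2n : |lam * G| = lam * G := abs_of_nonneg (by positivity)
    rw [e1n, e2n]
    have : G * (r⁻¹ * r⁻¹) * r = G * r⁻¹ := by field_simp
    rw [this]
  refine le_trans htri ?_
  -- rewrite RHS powers
  have hr32 : r ^ (-(3 / 2) : ℝ) = (a ^ 3)⁻¹ := by
    rw [Real.rpow_neg hr.le]
    congr 1
    rw [show ((3:ℝ)/2) = (1/2) * ((3:ℕ):ℝ) by norm_num, Real.rpow_mul hr.le,
      Real.rpow_natCast, hadef, Real.sqrt_eq_rpow]
  have hs12 : s ^ (-(1 / 2) : ℝ) = b⁻¹ := by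
    rw [Real.rpow_neg hs.le]
    congr 1
    rw [hbdef, Real.sqrt_eq_rpow]
  rw [hr32, hs12]
  -- bound the two terms
  have hinvpos : 0 < (4 * π * ν * r)⁻¹ := by positivity
  have hGle : G ≤ (4 * π * ν * r)⁻¹ := by
    rw [hGa]
    calc (4 * π * ν * r)⁻¹ * Real.exp (-lam * s) ≤ (4 * π * ν * r)⁻¹ * 1 :=
          mul_le_mul_of_nonneg_left hexple hinvpos.le
      _ = (4 * π * ν * r)⁻¹ := mul_one _
  have hlamG : lam * G ≤ (4 * π * ν * r)⁻¹ * s⁻¹ := by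
    rw [hGa]
    calc lam * ((4 * π * ν * r)⁻¹ * Real.exp (-lam * s))
        = (4 * π * ν * r)⁻¹ * (lam * Real.exp (-lam * s)) := by ring
      _ ≤ (4 * π * ν * r)⁻¹ * s⁻¹ := by
          exact mul_le_mul_of_nonneg_left hlamexp hinvpos.le
  have hterm1 : G * r⁻¹ ≤ (4 * π * ν * r)⁻¹ * r⁻¹ :=
    mul_le_mul_of_nonneg_right hGle (by positivity)
  have hterm2 : lam * G * w ≤ (4 * π * ν * r)⁻¹ * s⁻¹ * (Real.sqrt 2 * b / a) := by
    have h0 : 0 ≤ lam * G := by positivity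
    have hwnn : 0 ≤ w := norm_nonneg _
    calc lam * G * w ≤ ((4 * π * ν * r)⁻¹ * s⁻¹) * w :=
          mul_le_mul_of_nonneg_right hlamG hwnn
      _ ≤ (4 * π * ν * r)⁻¹ * s⁻¹ * (Real.sqrt 2 * b / a) :=
          mul_le_mul_of_nonneg_left hwle (by positivity)
  have hπ : (3:ℝ) ≤ π := by linarith [Real.pi_gt_three]
  have hcle : Real.sqrt 2 ≤ 2 := by nlinarith
  have hfinal : (4 * π * ν * r)⁻¹ * r⁻¹ + (4 * π * ν * r)⁻¹ * s⁻¹ * (Real.sqrt 2 * b / a)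
      ≤ 1 / ν * (a ^ 3)⁻¹ * b⁻¹ := by
    rw [← ha2, ← hb2]
    have hane : a ≠ 0 := ne_of_gt hapos
    have hbne : b ≠ 0 := ne_of_gt hbpos
    have hνne : ν ≠ 0 := ne_of_gt hν
    have hπ0 : (0:ℝ) < π := Real.pi_pos
    field_simp
    have hkey : b + Real.sqrt 2 * a ≤ 4 * π * a := by nlinarith
    have hmul := mul_le_mul_of_nonneg_left hkey
      (show (0:ℝ) ≤ 4 * π * ν ^ 2 * a ^ 6 * b ^ 2 by positivity)
    nlinarith [hmul]
  calc G * r⁻¹ + lam * G * w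
      ≤ (4 * π * ν * r)⁻¹ * r⁻¹ + (4 * π * ν * r)⁻¹ * s⁻¹ * (Real.sqrt 2 * b / a) :=
        add_le_add hterm1 hterm2
    _ ≤ 1 / ν * (a ^ 3)⁻¹ * b⁻¹ := hfinal
end
end
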